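/- arXiv:1911.12341 — 15 statements merged into one kernel-verified Lean document; each statement's English description precedes it below -/
import Mathlib

section
/- If K ⊆ K' are convex sets in ℝⁿ, the inequality αᵀx ≤ β is valid for K but not valid for K', and x₀ ∈ K exposes (α, β) with respect to K, then x₀ lies in the interior of K'. -/
open RealInnerProductSpace

theorem exposed_point_enters_interior {n : ℕ}
    (K K' : Set (EuclideanSpace ℝ (Fin n)))
    (hK : Convex ℝ K) (hK' : Convex ℝ K') (hKK' : K ⊆ K')
    (α : EuclideanSpace ℝ (Fin n)) (β : ℝ)
    (hvalid : ∀ x ∈ K, ⟪α, x⟫ ≤ β)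
    (hnotvalid : ¬ ∀ x ∈ K', ⟪α, x⟫ ≤ β)
    (x₀ : EuclideanSpace ℝ (Fin n)) (hx₀K : x₀ ∈ K)
    (htight : ⟪α, x₀⟫ = β)
    (hexp : ∀ (γ : EuclideanSpace ℝ (Fin n)) (δ : ℝ), (γ, δ) ≠ 0 →
      (∀ x ∈ K, ⟪γ, x⟫ ≤ δ) → ⟪γ, x₀⟫ = δ →
      ∃ μ : ℝ, 0 < μ ∧ γ = μ • α ∧ β = μ * δ) :
    x₀ ∈ interior K' := by
  by_contra hx₀
  have hx₀K' : x₀ ∈ K' := hKK' hx₀K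
  -- obtain a nonzero supporting vector γ at x₀ for K'
  have key : ∃ γ : EuclideanSpace ℝ (Fin n), γ ≠ 0 ∧ ∀ x ∈ K', ⟪γ, x⟫ ≤ ⟪γ, x₀⟫ := by
    by_cases hint : (interior K').Nonempty
    · obtain ⟨f, hf⟩ := geometric_hahn_banach_open_point hK'.interior isOpen_interior hx₀
      refine ⟨(InnerProductSpace.toDual ℝ _).symm f, ?_, ?_⟩
      · intro h
        have hf0 : f = 0 := by
          simpa using congrArg (InnerProductSpace.toDual ℝ _) h
        obtain ⟨a, ha⟩ := hint
        have := hf a ha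
        rw [hf0] at this
        simpa using this
      · intro x hx
        rw [InnerProductSpace.toDual_symm_apply, InnerProductSpace.toDual_symm_apply]
        obtain ⟨a, ha⟩ := hint
        -- x is a limit of points in the interior
        have hseq : ∀ k : ℕ, ((k:ℝ)+1)⁻¹ • a + (1 - ((k:ℝ)+1)⁻¹) • x ∈ interior K' := by
          intro k
          have h1 : (0:ℝ) < ((k:ℝ)+1)⁻¹ := by positivity
          have h2 : (0:ℝ) ≤ 1 - ((k:ℝ)+1)⁻¹ := by
            have : ((k:ℝ)+1)⁻¹ ≤ 1 := by
              rw [inv_le_one_iff₀]; right; linarith [Nat.cast_nonneg (α := ℝ) k]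
            linarith
          exact hK'.combo_interior_closure_mem_interior ha (subset_closure hx) h1 h2
            (by ring)
        have hlim : Filter.Tendsto
            (fun k : ℕ => f (((k:ℝ)+1)⁻¹ • a + (1 - ((k:ℝ)+1)⁻¹) • x))
            Filter.atTop (nhds (f x)) := by
          have h0 : Filter.Tendsto (fun k : ℕ => ((k:ℝ)+1)⁻¹) Filter.atTop (nhds 0) := by
            simpa [one_div] using (tendsto_one_div_add_atTop_nhds_zero_nat :
              Filter.Tendsto (fun n : ℕ => 1 / ((n : ℝ) + 1)) Filter.atTop (nhds 0))
          have : Filter.Tendsto (fun k : ℕ => ((k:ℝ)+1)⁻¹ • a + (1 - ((k:ℝ)+1)⁻¹) • x)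
              Filter.atTop (nhds x) := by
            have h1 : Filter.Tendsto (fun k : ℕ => ((1:ℝ) - ((k:ℝ)+1)⁻¹))
                Filter.atTop (nhds 1) := by
              simpa using (tendsto_const_nhds (x := (1:ℝ))).sub h0
            have := (h0.smul_const a).add (h1.smul_const x)
            simpa using this
          exact (f.continuous.tendsto x).comp this
        refine le_of_tendsto hlim (Filter.Eventually.of_forall fun k => ?_)
        exact (hf _ (hseq k)).le
    · -- interior empty: K' lies in a proper affine subspace
      have hspan : affineSpan ℝ K' ≠ ⊤ := by
        intro h
        exact hint (hK'.interior_nonempty_iff_affineSpan_eq_top.mpr h)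
      have hdir : (affineSpan ℝ K').direction ≠ ⊤ := by
        intro h
        exact hspan ((AffineSubspace.direction_eq_top_iff_of_nonempty
          ((affineSpan_nonempty (k := ℝ) (s := K')).mpr ⟨x₀, hx₀K'⟩)).mp h)
      have horth : ((affineSpan ℝ K').direction)ᗮ ≠ ⊥ := by
        intro h
        exact hdir (by
          have := Submodule.orthogonal_eq_bot_iff.mp h
          simpa using this)
      obtain ⟨γ, hγmem, hγne⟩ := Submodule.exists_mem_ne_zero_of_ne_bot horth
      refine ⟨γ, hγne, fun x hx => ?_⟩
      have hmem : x -ᵥ x₀ ∈ (affineSpan ℝ K').direction :=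
        AffineSubspace.vsub_mem_direction (subset_affineSpan ℝ K' hx)
          (subset_affineSpan ℝ K' hx₀K')
      have : ⟪γ, x - x₀⟫ = 0 := by
        have h2 := hγmem _ hmem
        rw [real_inner_comm]
        simpa [vsub_eq_sub] using h2
      rw [inner_sub_right] at this
      linarith
  obtain ⟨γ, hγne, hγsupp⟩ := key
  set δ := (⟪γ, x₀⟫ : ℝ) with hδ
  obtain ⟨μ, hμpos, hγα, hβμδ⟩ := hexp γ δ
    (by simp [Prod.ext_iff, hγne])
    (fun x hx => hγsupp x (hKK' hx)) rfl
  have hδval : δ = μ * β := by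
    rw [hδ, hγα, real_inner_smul_left, htight]
  apply hnotvalid
  intro x hx
  have h1 : ⟪γ, x⟫ ≤ δ := hγsupp x hx
  rw [hγα, real_inner_smul_left, hδval] at h1
  exact le_of_mul_le_mul_left (by linarith) hμpos
end

section
/- Let S ⊆ ℝⁿ be closed and C = {x ∈ ℝⁿ : αᵀx ≤ β for all (α,β) ∈ Γ} be a convex S-free set. If for every (α, β) ∈ Γ there exists x ∈ S ∩ C that exposes (α, β) with respect to C, then C is maximal S-free: for every x̄ ∉ C, the interior of conv(C ∪ {x̄}) intersects S. -/
/-!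
Let `x̄ ∉ C` violate the inequality `(α, β) ∈ Γ`, and let `x ∈ S ∩ C` expose `(α, β)`. If `x` were
not interior to `K = conv (C ∪ {x̄})`, a supporting hyperplane of `K` at `x` would give a nonzero
valid inequality of `C` tight at `x`, hence a positive multiple of `(α, β)`; but `x̄ ∈ K` satisfies
it, contradicting `β < ⟪α, x̄⟫`. So `x ∈ interior K ∩ S`.
-/

open RealInnerProductSpace

section SupportingHyperplane

variable {E : Type*} [NormedAddCommGroup E] [NormedSpace ℝ E] [FiniteDimensional ℝ E]

theorem exists_ne_zero_eq_of_affineSpan_ne_top {K : Set E} {x : E} (hx : x ∈ K)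
    (hK : affineSpan ℝ K ≠ ⊤) : ∃ f : StrongDual ℝ E, f ≠ 0 ∧ ∀ z ∈ K, f z = f x := by
  have hdir : (affineSpan ℝ K).direction < ⊤ := by
    refine lt_top_iff_ne_top.2 fun h => hK ?_
    exact (AffineSubspace.direction_eq_top_iff_of_nonempty ⟨x, subset_affineSpan ℝ K hx⟩).1 h
  obtain ⟨φ, hφ, hker⟩ := Submodule.exists_le_ker_of_lt_top _ hdir
  refine ⟨LinearMap.toContinuousLinearMap φ, fun h => hφ ?_, fun z hz => ?_⟩
  · ext v
    simpa using congrArg (· v) h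
  · have hzx : z -ᵥ x ∈ (affineSpan ℝ K).direction :=
      AffineSubspace.vsub_mem_direction (subset_affineSpan ℝ K hz) (subset_affineSpan ℝ K hx)
    have : φ (z - x) = 0 := hker hzx
    simpa [sub_eq_zero] using this

theorem Convex.exists_ne_zero_le_of_notMem_interior {K : Set E} (hK : Convex ℝ K) {x : E}
    (hx : x ∈ K) (hxi : x ∉ interior K) : ∃ f : StrongDual ℝ E, f ≠ 0 ∧ ∀ z ∈ K, f z ≤ f x := by
  rcases (interior K).eq_empty_or_nonempty with hint | hint
  · have hspan : affineSpan ℝ K ≠ ⊤ := by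
      rw [Ne, ← hK.interior_nonempty_iff_affineSpan_eq_top, hint]
      exact Set.not_nonempty_empty
    obtain ⟨f, hf, hfK⟩ := exists_ne_zero_eq_of_affineSpan_ne_top hx hspan
    exact ⟨f, hf, fun z hz => (hfK z hz).le⟩
  · exact geometric_hahn_banach_of_nonempty_interior_point hK hxi hint

end SupportingHyperplane

section Exposure

variable {E : Type*} [NormedAddCommGroup E] [InnerProductSpace ℝ E]

def ExposesInequality (C : Set E) (x α : E) (β : ℝ) : Prop :=
  ⟪α, x⟫ = β ∧ ∀ (γ : E) (δ : ℝ), (γ, δ) ≠ 0 → (∀ z ∈ C, ⟪γ, z⟫ ≤ δ) → ⟪γ, x⟫ = δ →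
    ∃ μ : ℝ, 0 < μ ∧ γ = μ • α ∧ β = μ * δ

theorem ExposesInequality.mem_interior_convexHull_union_singleton [FiniteDimensional ℝ E]
    {C : Set E} {x α xbar : E} {β : ℝ} (hxC : x ∈ C) (hx : ExposesInequality C x α β)
    (hviol : β < ⟪α, xbar⟫) : x ∈ interior (convexHull ℝ (C ∪ {xbar})) := by
  set K := convexHull ℝ (C ∪ {xbar})
  have hCK : C ⊆ K := Set.subset_union_left.trans (subset_convexHull ℝ _)
  by_contra hxi
  obtain ⟨f, hf, hfK⟩ := (convex_convexHull ℝ _).exists_ne_zero_le_of_notMem_interior (hCK hxC) hxi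
  set γ : E := (InnerProductSpace.toDual ℝ E).symm f
  have hγf : ∀ y, ⟪γ, y⟫ = f y := fun _ => InnerProductSpace.toDual_symm_apply
  have hγ : (γ, f x) ≠ 0 := fun h => hf (by simpa [γ] using congrArg Prod.fst h)
  obtain ⟨μ, hμ, hγα, -⟩ :=
    hx.2 γ (f x) hγ (fun z hz => (hγf z).trans_le (hfK z (hCK hz))) (hγf x)
  have hxbar : μ * ⟪α, xbar⟫ ≤ μ * ⟪α, x⟫ := by
    simpa only [← hγf, hγα, real_inner_smul_left] using
      hfK xbar (subset_convexHull ℝ _ (Or.inr rfl))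
  linarith [le_of_mul_le_mul_left hxbar hμ, hx.1]

end Exposure

theorem exposed_maximality_general {n : ℕ}
    (S : Set (EuclideanSpace ℝ (Fin n)))
    (Γ : Set (EuclideanSpace ℝ (Fin n) × ℝ))
    (C : Set (EuclideanSpace ℝ (Fin n)))
    (hC : C = {x | ∀ p ∈ Γ, ⟪p.1, x⟫ ≤ p.2})
    (hexp : ∀ p ∈ Γ, ∃ x ∈ S ∩ C, ⟪p.1, x⟫ = p.2 ∧
      ∀ (γ : EuclideanSpace ℝ (Fin n)) (δ : ℝ), (γ, δ) ≠ 0 →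
        (∀ z ∈ C, ⟪γ, z⟫ ≤ δ) → ⟪γ, x⟫ = δ →
        ∃ μ : ℝ, 0 < μ ∧ γ = μ • p.1 ∧ p.2 = μ * δ) :
    ∀ xbar ∉ C, (interior (convexHull ℝ (C ∪ {xbar})) ∩ S).Nonempty := by
  intro xbar hxbar
  obtain ⟨p, hpΓ, hviol⟩ : ∃ p ∈ Γ, p.2 < ⟪p.1, xbar⟫ := by
    by_contra! h
    exact hxbar (hC ▸ h)
  obtain ⟨x, ⟨hxS, hxC⟩, hx⟩ := hexp p hpΓ
  exact ⟨x, ExposesInequality.mem_interior_convexHull_union_singleton hxC hx hviol, hxS⟩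

theorem exposed_maximality {n : ℕ}
    (S : Set (EuclideanSpace ℝ (Fin n))) (hSclosed : IsClosed S)
    (Γ : Set (EuclideanSpace ℝ (Fin n) × ℝ))
    (C : Set (EuclideanSpace ℝ (Fin n)))
    (hC : C = {x | ∀ p ∈ Γ, ⟪p.1, x⟫ ≤ p.2})
    (hCconv : Convex ℝ C)
    (hfree : interior C ∩ S = ∅)
    (hexp : ∀ p ∈ Γ, ∃ x ∈ S ∩ C, ⟪p.1, x⟫ = p.2 ∧
      ∀ (γ : EuclideanSpace ℝ (Fin n)) (δ : ℝ), (γ, δ) ≠ 0 →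
        (∀ z ∈ C, ⟪γ, z⟫ ≤ δ) → ⟪γ, x⟫ = δ →
        ∃ μ : ℝ, 0 < μ ∧ γ = μ • p.1 ∧ p.2 = μ * δ) :
    ∀ xbar ∉ C, (interior (convexHull ℝ (C ∪ {xbar})) ∩ S).Nonempty :=
  exposed_maximality_general S Γ C hC hexp
end

section
/- Let C ⊆ ℝⁿ be a full-dimensional closed convex cone with lineality space L and let S ⊆ ℝⁿ be closed. Then C is maximal S-free if and only if C ∩ L^⊥ is maximal cl(proj_{L^⊥} S)-free (as a subset of L^⊥). -/
open RealInnerProductSpace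

lemma aux_interior_closure {E : Type*} [NormedAddCommGroup E] [NormedSpace ℝ E]
    {s : Set E} (hs : Convex ℝ s) {x₀ : E} (hx₀ : x₀ ∈ interior s) :
    interior (closure s) ⊆ interior s := by
  intro y hy
  have hcont : Continuous (fun t : ℝ => y + t • (y - x₀)) := by continuity
  have h0 : (fun t : ℝ => y + t • (y - x₀)) 0 ∈ interior (closure s) := by simpa using hy
  have hopen : IsOpen ((fun t : ℝ => y + t • (y - x₀)) ⁻¹' interior (closure s)) :=
    isOpen_interior.preimage hcont
  obtain ⟨ε, hε, hball⟩ := Metric.isOpen_iff.1 hopen 0 h0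
  obtain ⟨δ, hδpos, hδlt⟩ : ∃ δ : ℝ, 0 < δ ∧ δ < ε := ⟨ε/2, by positivity, by linarith⟩
  have hz : y + δ • (y - x₀) ∈ closure s := by
    have hmem : δ ∈ Metric.ball (0:ℝ) ε := by
      rw [Metric.mem_ball, dist_zero_right, Real.norm_eq_abs, abs_of_pos hδpos]
      exact hδlt
    exact interior_subset (hball hmem)
  have h1 : (1:ℝ) + δ ≠ 0 := by positivity
  have key := hs.combo_closure_interior_mem_interior hz hx₀
    (a := 1/(1+δ)) (b := δ/(1+δ)) (by positivity) (by positivity)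
    (by field_simp)
  have heq : (1/(1+δ)) • (y + δ • (y - x₀)) + (δ/(1+δ)) • x₀ = y := by
    rw [smul_add, smul_smul, smul_sub]
    rw [div_mul_eq_mul_div, one_mul]
    have h2 : (1/(1+δ)) • y + ((δ/(1+δ)) • y - (δ/(1+δ)) • x₀) + (δ/(1+δ)) • x₀
        = ((1/(1+δ)) + (δ/(1+δ))) • y := by
      rw [add_smul]; abel
    rw [h2]
    have h3 : (1/(1+δ)) + (δ/(1+δ)) = 1 := by field_simp
    rw [h3, one_smul]
  rwa [heq] at key

lemma aux_add_mem_closure {E : Type*} [NormedAddCommGroup E] [NormedSpace ℝ E]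
    {s : Set E} (hs : Convex ℝ s) {x l : E} (hx : x ∈ s)
    (hl : ∀ t : ℝ, 0 < t → t • l ∈ s) : x + l ∈ closure s := by
  have hmem : ∀ m : ℕ, (1 - 1/((m:ℝ)+1)) • x + l ∈ s := by
    intro m
    have hm : (0:ℝ) < (m:ℝ) + 1 := by positivity
    have ht : (0:ℝ) < 1/((m:ℝ)+1) := by positivity
    have ht1 : 1/((m:ℝ)+1) ≤ 1 := by
      rw [div_le_one hm]; linarith [Nat.cast_nonneg (α := ℝ) m]
    have hw : (((m:ℝ)+1)) • l ∈ s := hl _ hm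
    have hcomb := hs (a := 1 - 1/((m:ℝ)+1)) (b := 1/((m:ℝ)+1)) hx hw
      (by linarith) (le_of_lt ht) (by ring)
    have heq : (1 - 1/((m:ℝ)+1)) • x + (1/((m:ℝ)+1)) • (((m:ℝ)+1) • l)
        = (1 - 1/((m:ℝ)+1)) • x + l := by
      rw [smul_smul, one_div, inv_mul_cancel₀ (ne_of_gt hm), one_smul]
    rwa [heq] at hcomb
  have htend : Filter.Tendsto (fun m : ℕ => (1 - 1/((m:ℝ)+1)) • x + l)
      Filter.atTop (nhds (x + l)) := by
    have h1 : Filter.Tendsto (fun m : ℕ => 1/((m:ℝ)+1)) Filter.atTop (nhds 0) :=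
      tendsto_one_div_add_atTop_nhds_zero_nat
    have h2 : Filter.Tendsto (fun m : ℕ => (1 - 1/((m:ℝ)+1))) Filter.atTop (nhds 1) := by
      simpa using (tendsto_const_nhds (x := (1:ℝ)) (f := Filter.atTop)).sub h1
    have := (h2.smul_const x).add_const l
    simpa using this
  exact mem_closure_of_tendsto htend (Filter.Eventually.of_forall hmem)

theorem maximal_free_iff_projection {n : ℕ}
    (C S : Set (EuclideanSpace ℝ (Fin n)))
    (hCclosed : IsClosed C) (hCconv : Convex ℝ C)
    (hCcone : ∀ x ∈ C, ∀ t : ℝ, 0 ≤ t → t • x ∈ C)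
    (hfull : (interior C).Nonempty)
    (hSclosed : IsClosed S)
    (L : Submodule ℝ (EuclideanSpace ℝ (Fin n)))
    (hL : (L : Set (EuclideanSpace ℝ (Fin n))) = C ∩ (-C)) :
    (interior C ∩ S = ∅ ∧
      ∀ C' : Set (EuclideanSpace ℝ (Fin n)), Convex ℝ C' →
        interior C' ∩ S = ∅ → C ⊆ C' → C' ⊆ C)
    ↔
    (interior (((↑) : Lᗮ → EuclideanSpace ℝ (Fin n)) ⁻¹' C) ∩
        closure ((Submodule.orthogonalProjection Lᗮ) '' S) = ∅ ∧
      ∀ K' : Set Lᗮ, Convex ℝ K' →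
        interior K' ∩ closure ((Submodule.orthogonalProjection Lᗮ) '' S) = ∅ →
        (((↑) : Lᗮ → EuclideanSpace ℝ (Fin n)) ⁻¹' C) ⊆ K' →
        K' ⊆ (((↑) : Lᗮ → EuclideanSpace ℝ (Fin n)) ⁻¹' C)) := by
  have hE : True := trivial
  set P : EuclideanSpace ℝ (Fin n) →L[ℝ] Lᗮ := Submodule.orthogonalProjection Lᗮ with hP
  set K : Set Lᗮ := ((↑) : Lᗮ → EuclideanSpace ℝ (Fin n)) ⁻¹' C with hK
  -- basic facts
  have hLC : ∀ l, l ∈ L → l ∈ C := fun l hl => (by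
    have : l ∈ (L : Set (EuclideanSpace ℝ (Fin n))) := hl
    rw [hL] at this; exact this.1)
  have hadd : ∀ x ∈ C, ∀ l ∈ L, x + l ∈ C := by
    intro x hx l hl
    have hmid : (1/2 : ℝ) • x + (1/2 : ℝ) • l ∈ C :=
      hCconv hx (hLC l hl) (by norm_num) (by norm_num) (by norm_num)
    have := hCcone _ hmid 2 (by norm_num)
    rw [smul_add, smul_smul, smul_smul] at this
    norm_num at this
    exact this
  have hsubP : ∀ x : EuclideanSpace ℝ (Fin n), x - (P x : EuclideanSpace ℝ (Fin n)) ∈ L := by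
    intro x
    have := Submodule.sub_starProjection_mem_orthogonal (K := Lᗮ) x
    rwa [Submodule.orthogonal_orthogonal] at this
  have hker : ∀ v : EuclideanSpace ℝ (Fin n), P v = 0 → v ∈ L := by
    intro v hv
    have := hsubP v
    rw [hv] at this
    simpa using this
  have hPcoe : ∀ y : Lᗮ, P (y : EuclideanSpace ℝ (Fin n)) = y := fun y =>
    Submodule.orthogonalProjection_mem_subspace_eq_self y
  have hPsurj : Function.Surjective P := fun y => ⟨y, hPcoe y⟩
  have hPopen : IsOpenMap P := ContinuousLinearMap.isOpenMap P hPsurj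
  have hmemC : ∀ x : EuclideanSpace ℝ (Fin n), x ∈ C ↔ ((P x : EuclideanSpace ℝ (Fin n)) ∈ C) := by
    intro x
    constructor
    · intro hx
      have := hadd x hx (-(x - (P x : EuclideanSpace ℝ (Fin n)))) (neg_mem (hsubP x))
      simpa using this
    · intro hx
      have := hadd _ hx (x - (P x : EuclideanSpace ℝ (Fin n))) (hsubP x)
      simpa using this
  -- interior correspondence
  have hintC : ∀ x : EuclideanSpace ℝ (Fin n), x ∈ interior C ↔ P x ∈ interior K := by
    intro x
    constructor
    · intro hx
      -- first: (P x : EuclideanSpace ℝ (Fin n)) ∈ interior C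
      have htrans : ∀ l ∈ L, ∀ z ∈ interior C, z + l ∈ interior C := by
        intro l hl z hz
        have hopen : IsOpen ((fun w : EuclideanSpace ℝ (Fin n) => w + l) '' interior C) :=
          (isOpenMap_add_right l) _ isOpen_interior
        have hsub : (fun w : EuclideanSpace ℝ (Fin n) => w + l) '' interior C ⊆ C := by
          rintro _ ⟨w, hw, rfl⟩
          exact hadd w (interior_subset hw) l hl
        exact interior_maximal hsub hopen ⟨z, hz, rfl⟩
      have hPx : (P x : EuclideanSpace ℝ (Fin n)) ∈ interior C := by
        have := htrans (-(x - (P x : EuclideanSpace ℝ (Fin n)))) (neg_mem (hsubP x)) x hx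
        simpa using this
      have hopen : IsOpen (((↑) : Lᗮ → EuclideanSpace ℝ (Fin n)) ⁻¹' interior C) :=
        isOpen_interior.preimage continuous_subtype_val
      have hsub : (((↑) : Lᗮ → EuclideanSpace ℝ (Fin n)) ⁻¹' interior C) ⊆ K :=
        fun y hy => show (y : EuclideanSpace ℝ (Fin n)) ∈ C from interior_subset hy
      exact interior_maximal hsub hopen hPx
    · intro hx
      have hopen : IsOpen (P ⁻¹' interior K) := isOpen_interior.preimage P.continuous
      have hsub : P ⁻¹' interior K ⊆ C := by
        intro z hz
        have : (P z : EuclideanSpace ℝ (Fin n)) ∈ C := interior_subset (s := K) hz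
        exact (hmemC z).2 this
      exact interior_maximal hsub hopen hx
  have hintPre : ∀ D : Set Lᗮ, interior (P ⁻¹' D) = P ⁻¹' (interior D) := by
    intro D
    apply subset_antisymm
    · intro x hx
      have ho := hPopen _ (isOpen_interior (s := P ⁻¹' D))
      have hsub : P '' interior (P ⁻¹' D) ⊆ D := by
        rintro _ ⟨z, hz, rfl⟩
        exact interior_subset (s := ⇑P ⁻¹' D) hz
      exact interior_maximal hsub ho ⟨x, hx, rfl⟩
    · exact preimage_interior_subset_interior_preimage P.continuous
  constructor
  · rintro ⟨hfree, hmax⟩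
    constructor
    · rw [Set.eq_empty_iff_forall_notMem]
      rintro y ⟨hy1, hy2⟩
      obtain ⟨z, hz1, hz2⟩ := mem_closure_iff.1 hy2 _ isOpen_interior hy1
      obtain ⟨s, hs, rfl⟩ := hz2
      have : s ∈ interior C := (hintC s).2 hz1
      exact Set.eq_empty_iff_forall_notMem.1 hfree s ⟨this, hs⟩
    · intro K' hK'conv hK'free hKK'
      have hC'conv : Convex ℝ (P ⁻¹' K') := hK'conv.linear_preimage (P : EuclideanSpace ℝ (Fin n) →ₗ[ℝ] Lᗮ)
      have hC'free : interior (P ⁻¹' K') ∩ S = ∅ := by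
        rw [Set.eq_empty_iff_forall_notMem]
        rintro s ⟨hs1, hs2⟩
        rw [hintPre K'] at hs1
        have hPs : P s ∈ closure ((Submodule.orthogonalProjection Lᗮ) '' S) :=
          subset_closure ⟨s, hs2, rfl⟩
        exact Set.eq_empty_iff_forall_notMem.1 hK'free (P s) ⟨hs1, hPs⟩
      have hCC' : C ⊆ P ⁻¹' K' := by
        intro x hx
        exact hKK' ((hmemC x).1 hx)
      have hC'C := hmax _ hC'conv hC'free hCC'
      intro y hy
      have : (y : EuclideanSpace ℝ (Fin n)) ∈ P ⁻¹' K' := by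
        show P (y : EuclideanSpace ℝ (Fin n)) ∈ K'
        rw [hPcoe y]; exact hy
      have : (y : EuclideanSpace ℝ (Fin n)) ∈ C := hC'C this
      exact this
  · rintro ⟨hfreeK, hmaxK⟩
    constructor
    · rw [Set.eq_empty_iff_forall_notMem]
      rintro s ⟨hs1, hs2⟩
      have h1 : P s ∈ interior K := (hintC s).1 hs1
      have h2 : P s ∈ closure ((Submodule.orthogonalProjection Lᗮ) '' S) :=
        subset_closure ⟨s, hs2, rfl⟩
      exact Set.eq_empty_iff_forall_notMem.1 hfreeK (P s) ⟨h1, h2⟩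
    · intro C' hC'conv hC'free hCC'
      -- K' := P '' C'
      have hLC' : ∀ t : ℝ, ∀ l ∈ L, 0 < t → t • l ∈ C' := by
        intro t l hl ht
        exact hCC' (hLC _ (L.smul_mem t hl))
      have hpreclos : P ⁻¹' (P '' C') ⊆ closure C' := by
        rintro z ⟨x, hx, hPz⟩
        have hdiff : z - x ∈ L := by
          apply hker
          rw [map_sub, hPz, sub_self]
        have := aux_add_mem_closure hC'conv hx (fun t ht => hLC' t _ hdiff ht)
        simpa using this
      have hintC'ne : (interior C').Nonempty := by
        obtain ⟨x, hx⟩ := hfull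
        exact ⟨x, interior_mono hCC' hx⟩
      obtain ⟨x₀, hx₀⟩ := hintC'ne
      have hK'conv : Convex ℝ (P '' C') := hC'conv.linear_image (P : EuclideanSpace ℝ (Fin n) →ₗ[ℝ] Lᗮ)
      have hK'free : interior (P '' C') ∩ closure ((Submodule.orthogonalProjection Lᗮ) '' S) = ∅ := by
        rw [Set.eq_empty_iff_forall_notMem]
        rintro y ⟨hy1, hy2⟩
        obtain ⟨z, hz1, hz2⟩ := mem_closure_iff.1 hy2 _ isOpen_interior hy1
        obtain ⟨s, hs, rfl⟩ := hz2
        -- s ∈ interior C'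
        have h1 : s ∈ interior (P ⁻¹' (P '' C')) := by
          rw [hintPre]; exact hz1
        have h2 : s ∈ interior (closure C') :=
          interior_mono hpreclos h1
        have h3 : s ∈ interior C' := aux_interior_closure hC'conv hx₀ h2
        exact Set.eq_empty_iff_forall_notMem.1 hC'free s ⟨h3, hs⟩
      have hKK' : K ⊆ P '' C' := by
        intro y hy
        exact ⟨(y : EuclideanSpace ℝ (Fin n)), hCC' hy, hPcoe y⟩
      have hK'K := hmaxK _ hK'conv hK'free hKK'
      intro x hx
      have h1 : P x ∈ P '' C' := ⟨x, hx, rfl⟩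
      have h2 : P x ∈ K := hK'K h1
      exact (hmemC x).2 h2
end

section
/- Let φ : ℝᵐ → ℝ be sublinear, λ ∈ ℝⁿ with ‖λ‖ = 1, and C = {(x,y) ∈ ℝⁿ⁺ᵐ : φ(y) ≤ λᵀx}. If (x̄, ȳ) ∈ C is such that φ is differentiable at ȳ and φ(ȳ) = λᵀx̄, then (x̄, ȳ) exposes the valid inequality −λᵀx + ∇φ(ȳ)ᵀy ≤ 0 with respect to C. -/
open RealInnerProductSpace Filter

private lemma slope_ge_lim {ψ : ℝ → ℝ} {d c : ℝ} (hd : HasDerivAt ψ d 0)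
    (h : ∀ᶠ t in nhdsWithin 0 (Set.Ioi 0), c ≤ slope ψ 0 t) : c ≤ d := by
  have h1 := hasDerivAt_iff_tendsto_slope.mp hd
  have h2 : Tendsto (slope ψ 0) (nhdsWithin 0 (Set.Ioi 0)) (nhds d) :=
    h1.mono_left (nhdsWithin_mono 0 (fun x hx => by simpa using ne_of_gt hx))
  exact ge_of_tendsto h2 h

private lemma slope_le_lim {ψ : ℝ → ℝ} {d c : ℝ} (hd : HasDerivAt ψ d 0)
    (h : ∀ᶠ t in nhdsWithin 0 (Set.Ioi 0), slope ψ 0 t ≤ c) : d ≤ c := by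
  have h1 := hasDerivAt_iff_tendsto_slope.mp hd
  have h2 : Tendsto (slope ψ 0) (nhdsWithin 0 (Set.Ioi 0)) (nhds d) :=
    h1.mono_left (nhdsWithin_mono 0 (fun x hx => by simpa using ne_of_gt hx))
  exact le_of_tendsto h2 h

private lemma line_deriv {m : ℕ} {φ : EuclideanSpace ℝ (Fin m) → ℝ}
    {g yb : EuclideanSpace ℝ (Fin m)} (hg : HasGradientAt φ g yb)
    (v : EuclideanSpace ℝ (Fin m)) :
    HasDerivAt (fun t : ℝ => φ (yb + t • v)) ⟪g, v⟫ 0 := by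
  have hL : HasDerivAt (fun t : ℝ => yb + t • v) v 0 := by
    simpa using ((hasDerivAt_id (0:ℝ)).smul_const v).const_add yb
  have hF := hg.hasFDerivAt
  have hF' : HasFDerivAt φ ((InnerProductSpace.toDual ℝ (EuclideanSpace ℝ (Fin m))) g) ((0:ℝ) • v + yb) := by simpa using hF
  have hF'' : HasFDerivAt φ ((InnerProductSpace.toDual ℝ (EuclideanSpace ℝ (Fin m))) g) (yb + (0:ℝ) • v) := by
    simpa using hF
  have := hF''.comp_hasDerivAt (x := (0:ℝ)) hL
  simp at this; exact this

theorem exposing_ineq {n m : ℕ}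
    (φ : EuclideanSpace ℝ (Fin m) → ℝ)
    (hconv : ConvexOn ℝ Set.univ φ)
    (hpos : ∀ t : ℝ, 0 ≤ t → ∀ y, φ (t • y) = t * φ y)
    (lam : EuclideanSpace ℝ (Fin n)) (hlam : ‖lam‖ = 1)
    (C : Set (EuclideanSpace ℝ (Fin n) × EuclideanSpace ℝ (Fin m)))
    (hC : C = {p | φ p.2 ≤ ⟪lam, p.1⟫})
    (xb : EuclideanSpace ℝ (Fin n)) (yb : EuclideanSpace ℝ (Fin m))
    (hmem : (xb, yb) ∈ C)
    (g : EuclideanSpace ℝ (Fin m)) (hg : HasGradientAt φ g yb)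
    (htight : φ yb = ⟪lam, xb⟫) :
    ⟪-lam, xb⟫ + ⟪g, yb⟫ = 0 ∧
    (∀ p ∈ C, ⟪-lam, p.1⟫ + ⟪g, p.2⟫ ≤ 0) ∧
    ∀ (γ₁ : EuclideanSpace ℝ (Fin n)) (γ₂ : EuclideanSpace ℝ (Fin m)) (δ : ℝ),
      (γ₁, γ₂, δ) ≠ 0 →
      (∀ p ∈ C, ⟪γ₁, p.1⟫ + ⟪γ₂, p.2⟫ ≤ δ) →
      ⟪γ₁, xb⟫ + ⟪γ₂, yb⟫ = δ →
      ∃ μ : ℝ, 0 < μ ∧ γ₁ = μ • (-lam) ∧ γ₂ = μ • g ∧ (0 : ℝ) = μ * δ := by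
  subst hC
  -- Euler's relation : ⟪g, yb⟫ = φ yb
  have euler : ⟪g, yb⟫ = φ yb := by
    have hd1 : HasDerivAt (fun t : ℝ => φ (yb + t • yb)) ⟪g, yb⟫ 0 := line_deriv hg yb
    have hd2 : HasDerivAt (fun t : ℝ => φ (yb + t • yb)) (φ yb) 0 := by
      have heq : (fun t : ℝ => φ (yb + t • yb)) =ᶠ[nhds (0:ℝ)] (fun t : ℝ => (1 + t) * φ yb) := by
        filter_upwards [eventually_gt_nhds (by norm_num : (-1:ℝ) < 0)] with t ht
        have h1 : (0:ℝ) ≤ 1 + t := by linarith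
        have hyt : yb + t • yb = (1 + t) • yb := by module
        simp only [hyt, hpos _ h1]
      have hlin : HasDerivAt (fun t : ℝ => (1 + t) * φ yb) (φ yb) 0 := by
        simpa using (((hasDerivAt_id (0:ℝ)).const_add 1).mul_const (φ yb))
      exact hlin.congr_of_eventuallyEq heq
    exact hd1.unique hd2
  -- gradient inequality: ∀ y, ⟪g, y - yb⟫ ≤ φ y - φ yb
  have gradineq : ∀ y, ⟪g, y - yb⟫ ≤ φ y - φ yb := by
    intro y
    have hd : HasDerivAt (fun t : ℝ => φ (yb + t • (y - yb))) ⟪g, y - yb⟫ 0 := line_deriv hg _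
    refine slope_le_lim hd ?_
    filter_upwards [Filter.eventually_of_mem (Ioo_mem_nhdsGT_of_mem ⟨le_refl (0:ℝ), one_pos⟩) (fun t ht => ht)] with t ht
    obtain ⟨ht0, ht1⟩ := ht
    have hcv := hconv.2 (Set.mem_univ yb) (Set.mem_univ y) (by linarith : (0:ℝ) ≤ 1 - t) ht0.le (by ring)
    have hpt : yb + t • (y - yb) = (1 - t) • yb + t • y := by module
    rw [slope_def_field]
    rw [show (0:ℝ) • (y - yb) = 0 by module] at *
    have : φ (yb + t • (y - yb)) - φ (yb + 0) ≤ t * (φ y - φ yb) := by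
      rw [hpt]
      simp only [add_zero, smul_eq_mul] at hcv ⊢
      nlinarith [hcv]
    calc (φ (yb + t • (y - yb)) - φ (yb + 0)) / (t - 0) ≤ (t * (φ y - φ yb)) / (t - 0) := by
          apply div_le_div_of_nonneg_right this ?_ |>.trans_eq rfl
          · linarith
      _ = φ y - φ yb := by field_simp; ring
  have gle : ∀ y, ⟪g, y⟫ ≤ φ y := by
    intro y
    have := gradineq y
    rw [inner_sub_right] at this
    linarith [euler]
  have hmem' : φ yb ≤ ⟪lam, xb⟫ := hmem
  refine ⟨by rw [inner_neg_left]; linarith [euler, htight], ?_, ?_⟩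
  · intro p hp
    have hp' : φ p.2 ≤ ⟪lam, p.1⟫ := hp
    rw [inner_neg_left]
    linarith [gle p.2]
  · intro γ₁ γ₂ δ hne hvalid htight'
    -- δ ≥ 0 from 0 ∈ C
    have hφ0 : φ 0 = 0 := by
      have := hpos 0 le_rfl 0
      simpa using this
    have h0C : ((0 : EuclideanSpace ℝ (Fin n)), (0 : EuclideanSpace ℝ (Fin m))) ∈
        {p : EuclideanSpace ℝ (Fin n) × EuclideanSpace ℝ (Fin m) | φ p.2 ≤ ⟪lam, p.1⟫} := by
      simp [hφ0]
    have hδ0 : 0 ≤ δ := by simpa using hvalid _ h0C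
    -- validity with rhs 0
    have hvalid0 : ∀ p ∈ {p : EuclideanSpace ℝ (Fin n) × EuclideanSpace ℝ (Fin m) | φ p.2 ≤ ⟪lam, p.1⟫},
        ⟪γ₁, p.1⟫ + ⟪γ₂, p.2⟫ ≤ 0 := by
      intro p hp
      by_contra hlt
      push_neg at hlt
      set s := ⟪γ₁, p.1⟫ + ⟪γ₂, p.2⟫ with hs
      have hscale : ∀ t : ℝ, 0 ≤ t → t * s ≤ δ := by
        intro t ht
        have hmem2 : (t • p.1, t • p.2) ∈
            {p : EuclideanSpace ℝ (Fin n) × EuclideanSpace ℝ (Fin m) | φ p.2 ≤ ⟪lam, p.1⟫} := by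
          have hp' : φ p.2 ≤ ⟪lam, p.1⟫ := hp
          simp only [Set.mem_setOf_eq]
          rw [hpos t ht, real_inner_smul_right]
          exact mul_le_mul_of_nonneg_left hp' ht
        have h2 := hvalid _ hmem2
        simp only [real_inner_smul_right] at h2
        rw [hs, mul_add]
        exact h2
      have := hscale ((δ + 1) / s) (by positivity)
      rw [div_mul_cancel₀ _ (ne_of_gt hlt)] at this
      linarith
    have htb : ⟪γ₁, xb⟫ + ⟪γ₂, yb⟫ ≤ 0 := hvalid0 _ hmem
    have hδeq : δ = 0 := le_antisymm (htight' ▸ htb) hδ0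
    have htight0 : ⟪γ₁, xb⟫ + ⟪γ₂, yb⟫ = 0 := by rw [htight', hδeq]
    -- γ₁ = c • lam
    set c : ℝ := ⟪lam, γ₁⟫ with hc
    have hll : ⟪lam, lam⟫ = 1 := by
      rw [real_inner_self_eq_norm_sq, hlam]; norm_num
    have hmemshift : ∀ t : ℝ, (xb + t • (γ₁ - c • lam), yb) ∈
        {p : EuclideanSpace ℝ (Fin n) × EuclideanSpace ℝ (Fin m) | φ p.2 ≤ ⟪lam, p.1⟫} := by
      intro t
      simp only [Set.mem_setOf_eq]
      rw [inner_add_right, real_inner_smul_right, inner_sub_right, real_inner_smul_right, hll]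
      simpa [hc] using hmem'
    have hw0 : ⟪γ₁, γ₁ - c • lam⟫ = 0 := by
      have key : ∀ t : ℝ, t * ⟪γ₁, γ₁ - c • lam⟫ ≤ 0 := by
        intro t
        have := hvalid0 _ (hmemshift t)
        simp only [inner_add_right, real_inner_smul_right] at this
        linarith [htight0]
      have h1 := key 1
      have h2 := key (-1)
      linarith
    have hγ₁ : γ₁ = c • lam := by
      have : ⟪γ₁ - c • lam, γ₁ - c • lam⟫ = 0 := by
        rw [inner_sub_left, real_inner_smul_left, hw0, inner_sub_right, real_inner_smul_right,
          hll, ← hc]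
        ring
      have := inner_self_eq_zero.mp this
      rw [sub_eq_zero] at this
      exact this
    -- μ := -c ≥ 0
    have hmemx : (xb + lam, yb) ∈
        {p : EuclideanSpace ℝ (Fin n) × EuclideanSpace ℝ (Fin m) | φ p.2 ≤ ⟪lam, p.1⟫} := by
      simp only [Set.mem_setOf_eq, inner_add_right, hll]
      linarith
    have hcomm : ⟪γ₁, lam⟫ = c := by rw [hc]; exact real_inner_comm lam γ₁
    have hcle : c ≤ 0 := by
      have h2 := hvalid0 _ hmemx
      simp only [inner_add_right] at h2
      rw [hcomm] at h2
      linarith [htight0]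
    set μ : ℝ := -c with hμ
    have hμ0 : 0 ≤ μ := by linarith
    -- ∀ y : ⟪γ₂, y⟫ ≤ μ * φ y
    have hγ₂le : ∀ y, ⟪γ₂, y⟫ ≤ μ * φ y := by
      intro y
      have hmemy : ((φ y) • lam, y) ∈
          {p : EuclideanSpace ℝ (Fin n) × EuclideanSpace ℝ (Fin m) | φ p.2 ≤ ⟪lam, p.1⟫} := by
        simp only [Set.mem_setOf_eq, real_inner_smul_right, hll]
        linarith
      have h2 := hvalid0 _ hmemy
      simp only [real_inner_smul_right, hcomm] at h2
      rw [hμ]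
      nlinarith [h2]
    -- μ ≠ 0
    have hμpos : 0 < μ := by
      rcases lt_or_eq_of_le hμ0 with h | h
      · exact h
      · exfalso
        have hc0 : c = 0 := by rw [hμ] at h; linarith
        have hγ₁0 : γ₁ = 0 := by rw [hγ₁, hc0, zero_smul]
        have hγ₂0 : γ₂ = 0 := by
          have h1 : ∀ y, ⟪γ₂, y⟫ ≤ 0 := by intro y; have := hγ₂le y; rw [← h] at this; linarith
          have h2 := h1 γ₂
          have h3 := h1 (-γ₂)
          rw [inner_neg_right] at h3
          have : ⟪γ₂, γ₂⟫ = 0 := le_antisymm h2 (by linarith)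
          exact inner_self_eq_zero.mp this
        have hδ0' : δ = 0 := hδeq
        apply hne
        rw [hγ₁0, hγ₂0, hδ0']
        rfl
    -- tightness: ⟪γ₂, yb⟫ = μ * φ yb
    have htγ₂ : ⟪γ₂, yb⟫ = μ * φ yb := by
      have h1 : ⟪γ₁, xb⟫ = c * ⟪lam, xb⟫ := by
        rw [hγ₁, real_inner_smul_left]
      rw [hμ]
      rw [h1, ← htight] at htight0
      linarith
    -- γ₂ = μ • g
    have hγ₂ : γ₂ = μ • g := by
      have hkey : ∀ v, ⟪γ₂, v⟫ = μ * ⟪g, v⟫ := by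
        have main : ∀ v, ⟪γ₂, v⟫ ≤ μ * ⟪g, v⟫ := by
          intro v
          have hd : HasDerivAt (fun t : ℝ => φ (yb + t • v)) ⟪g, v⟫ 0 := line_deriv hg v
          have hsl : μ⁻¹ * ⟪γ₂, v⟫ ≤ ⟪g, v⟫ := by
            refine slope_ge_lim hd ?_
            filter_upwards [eventually_mem_nhdsWithin] with t ht
            have ht0 : (0:ℝ) < t := ht
            rw [slope_def_field]
            have hle1 : ⟪γ₂, yb + t • v⟫ ≤ μ * φ (yb + t • v) := hγ₂le _
            rw [inner_add_right, real_inner_smul_right, htγ₂] at hle1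
            have h0 : φ (yb + (0:ℝ) • v) = φ yb := by
              rw [show yb + (0:ℝ) • v = yb by module]
            rw [h0, sub_zero]
            rw [le_div_iff₀ ht0]
            have hμinv : μ⁻¹ * (μ * φ (yb + t • v)) = φ (yb + t • v) := by
              field_simp
            calc μ⁻¹ * ⟪γ₂, v⟫ * t = μ⁻¹ * (t * ⟪γ₂, v⟫) := by ring
              _ ≤ μ⁻¹ * (μ * φ (yb + t • v) - μ * φ yb) := by
                  apply mul_le_mul_of_nonneg_left _ (by positivity)
                  linarith
              _ = φ (yb + t • v) - φ yb := by field_simp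
          calc ⟪γ₂, v⟫ = μ * (μ⁻¹ * ⟪γ₂, v⟫) := by field_simp
            _ ≤ μ * ⟪g, v⟫ := mul_le_mul_of_nonneg_left hsl hμ0
        intro v
        have h1 := main v
        have h2 := main (-v)
        rw [inner_neg_right, inner_neg_right] at h2
        linarith
      apply ext_inner_right ℝ
      intro v
      rw [real_inner_smul_left]
      exact hkey v
    refine ⟨μ, hμpos, ?_, hγ₂, by rw [hδeq, mul_zero]⟩
    rw [hγ₁, hμ]
    module
end

section
/- Let φ : ℝᵐ → ℝ be sublinear, λ ∈ ℝⁿ with ‖λ‖ = 1, and C = {(x,y) : φ(y) ≤ λᵀx}. If αᵀx + γᵀy ≤ δ is a non-trivial valid inequality for C, then α ≠ 0; and if additionally ‖α‖ = 1, then α = −λ and γ belongs to the subdifferential ∂φ(0), i.e., γᵀy ≤ φ(y) for all y. -/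
/-!
The set `C` is a cone, so a linear inequality valid on `C` remains valid with right-hand side `0`.
Testing it on the points `(φ y • λ, y)` and `(x, 0)` with `⟪λ, x⟫ ≥ 0` of `C` gives
`φ y ⟪α, λ⟫ + ⟪γ, y⟫ ≤ 0` and `⟪α, x⟫ ≤ 0` on the half-space `⟪λ, x⟫ ≥ 0`. The first rules out
`α = 0` (take `y = γ`); the second forces `α` to be a nonpositive multiple of `λ`, hence `α = -λ`
when `‖α‖ = 1`, and then the first reads `⟪γ, y⟫ ≤ φ y`.
-/

open RealInnerProductSpace

theorem le_zero_of_forall_le_of_smul_mem {E : Type*} [SMul ℝ E] {C : Set E} {f : E → ℝ} {δ : ℝ}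
    (hC : ∀ t : ℝ, 0 ≤ t → ∀ p ∈ C, t • p ∈ C)
    (hf : ∀ t : ℝ, 0 ≤ t → ∀ p, f (t • p) = t * f p)
    (hvalid : ∀ p ∈ C, f p ≤ δ) {p : E} (hp : p ∈ C) : f p ≤ 0 := by
  by_contra! hfp
  set t := (|δ| + 1) / f p
  have ht : 0 ≤ t := by positivity
  have hft : f (t • p) = |δ| + 1 := by rw [hf t ht, div_mul_cancel₀ _ hfp.ne']
  linarith [hvalid _ (hC t ht p hp), le_abs_self δ]

section InnerProductSpace

variable {E : Type*} [NormedAddCommGroup E] [InnerProductSpace ℝ E]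

theorem eq_inner_smul_of_forall_inner_eq_zero {lam α : E} (hlam : ‖lam‖ = 1)
    (h : ∀ x, ⟪lam, x⟫ = 0 → ⟪α, x⟫ = 0) : α = ⟪lam, α⟫ • lam := by
  set v := α - ⟪lam, α⟫ • lam
  have hv : ⟪lam, v⟫ = 0 := by
    simp [v, inner_sub_right, real_inner_smul_right, hlam]
  have hvv : ⟪v, v⟫ = 0 :=
    calc ⟪v, v⟫ = ⟪α, v⟫ - ⟪lam, α⟫ * ⟪lam, v⟫ := by
          simp only [v, inner_sub_left, real_inner_smul_left]
      _ = 0 := by rw [h v hv, hv]; ring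
  exact sub_eq_zero.1 (inner_self_eq_zero.1 hvv)

theorem eq_neg_of_forall_inner_nonpos_of_inner_nonneg {lam α : E} (hlam : ‖lam‖ = 1)
    (hα : ‖α‖ = 1) (h : ∀ x, 0 ≤ ⟪lam, x⟫ → ⟪α, x⟫ ≤ 0) : α = -lam := by
  have hspan : α = ⟪lam, α⟫ • lam := eq_inner_smul_of_forall_inner_eq_zero hlam fun x hx =>
    le_antisymm (h x hx.ge) (by simpa [inner_neg_right] using h (-x) (by simp [inner_neg_right, hx]))
  have hc : ⟪lam, α⟫ ≤ 0 := by
    rw [real_inner_comm]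
    exact h lam (by simp [hlam])
  have habs : |⟪lam, α⟫| = 1 := by
    simpa [norm_smul, hlam, hα] using (congrArg norm hspan).symm
  have hc1 : ⟪lam, α⟫ = -1 := by rw [abs_of_nonpos hc] at habs; linarith
  calc α = ⟪lam, α⟫ • lam := hspan
    _ = -lam := by rw [hc1, neg_one_smul]

end InnerProductSpace

section EpigraphCone

variable {E F : Type*} [NormedAddCommGroup E] [InnerProductSpace ℝ E]

def epigraphCone (φ : F → ℝ) (lam : E) : Set (E × F) := {p | φ p.2 ≤ ⟪lam, p.1⟫}

variable {φ : F → ℝ} {lam : E}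

theorem epigraphCone.smul_mem [SMul ℝ F] (hpos : ∀ t : ℝ, 0 ≤ t → ∀ y, φ (t • y) = t * φ y) {t : ℝ}
    (ht : 0 ≤ t) {p : E × F} (hp : p ∈ epigraphCone φ lam) : t • p ∈ epigraphCone φ lam := by
  change φ (t • p.2) ≤ ⟪lam, t • p.1⟫
  rw [hpos t ht, real_inner_smul_right]
  exact mul_le_mul_of_nonneg_left hp ht

theorem epigraphCone.mk_smul_mem (hlam : ‖lam‖ = 1) (y : F) :
    (φ y • lam, y) ∈ epigraphCone φ lam := by
  simp [epigraphCone, real_inner_smul_right, hlam]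

theorem epigraphCone.mk_zero_mem [Zero F] (hφ : φ 0 = 0) {x : E} (hx : 0 ≤ ⟪lam, x⟫) :
    ((x, 0) : E × F) ∈ epigraphCone φ lam := by
  simpa [epigraphCone, hφ] using hx

end EpigraphCone

theorem valid_ineqs_of_epigraph_cone_general {n m : ℕ}
    (φ : EuclideanSpace ℝ (Fin m) → ℝ)
    (hpos : ∀ t : ℝ, 0 ≤ t → ∀ y, φ (t • y) = t * φ y)
    (lam : EuclideanSpace ℝ (Fin n)) (hlam : ‖lam‖ = 1)
    (C : Set (EuclideanSpace ℝ (Fin n) × EuclideanSpace ℝ (Fin m)))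
    (hC : C = {p | φ p.2 ≤ ⟪lam, p.1⟫})
    (α : EuclideanSpace ℝ (Fin n)) (γ : EuclideanSpace ℝ (Fin m)) (δ : ℝ)
    (hnontriv : ¬(α = 0 ∧ γ = 0))
    (hvalid : ∀ p ∈ C, ⟪α, p.1⟫ + ⟪γ, p.2⟫ ≤ δ) :
    α ≠ 0 ∧ (‖α‖ = 1 → α = -lam ∧ ∀ y, ⟪γ, y⟫ ≤ φ y) := by
  change C = epigraphCone φ lam at hC
  subst hC
  have hvalid₀ : ∀ p ∈ epigraphCone φ lam, ⟪α, p.1⟫ + ⟪γ, p.2⟫ ≤ 0 := fun _ =>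
    le_zero_of_forall_le_of_smul_mem (fun _ ht _ => epigraphCone.smul_mem hpos ht)
      (fun t _ p => by simp only [Prod.smul_fst, Prod.smul_snd, real_inner_smul_right]; ring) hvalid
  have hgraph : ∀ y, φ y * ⟪α, lam⟫ + ⟪γ, y⟫ ≤ 0 := fun y => by
    simpa [real_inner_smul_right] using hvalid₀ _ (epigraphCone.mk_smul_mem hlam y)
  have hφ0 : φ 0 = 0 := by simpa using hpos 0 le_rfl 0
  have hhalf : ∀ x, 0 ≤ ⟪lam, x⟫ → ⟪α, x⟫ ≤ 0 := fun x hx => by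
    simpa using hvalid₀ _ (epigraphCone.mk_zero_mem hφ0 hx)
  refine ⟨?_, fun hα => ?_⟩
  · rintro rfl
    have hγ : γ ≠ 0 := fun hγ => hnontriv ⟨rfl, hγ⟩
    simpa [hγ] using hgraph γ
  · obtain rfl := eq_neg_of_forall_inner_nonpos_of_inner_nonneg hlam hα hhalf
    refine ⟨rfl, fun y => ?_⟩
    simpa [real_inner_self_eq_norm_sq, hlam] using hgraph y

theorem valid_ineqs_of_epigraph_cone {n m : ℕ}
    (φ : EuclideanSpace ℝ (Fin m) → ℝ)
    (hconv : ConvexOn ℝ Set.univ φ)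
    (hpos : ∀ t : ℝ, 0 ≤ t → ∀ y, φ (t • y) = t * φ y)
    (lam : EuclideanSpace ℝ (Fin n)) (hlam : ‖lam‖ = 1)
    (C : Set (EuclideanSpace ℝ (Fin n) × EuclideanSpace ℝ (Fin m)))
    (hC : C = {p | φ p.2 ≤ ⟪lam, p.1⟫})
    (α : EuclideanSpace ℝ (Fin n)) (γ : EuclideanSpace ℝ (Fin m)) (δ : ℝ)
    (hnontriv : ¬(α = 0 ∧ γ = 0))
    (hvalid : ∀ p ∈ C, ⟪α, p.1⟫ + ⟪γ, p.2⟫ ≤ δ) :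
    α ≠ 0 ∧ (‖α‖ = 1 → α = -lam ∧ ∀ y, ⟪γ, y⟫ ≤ φ y) :=
  valid_ineqs_of_epigraph_cone_general φ hpos lam hlam C hC α γ δ hnontriv hvalid
end

section
/- Let S = {(x,y) ∈ ℝⁿ⁺ᵐ : ‖x‖ ≤ ‖y‖} and, for λ ∈ ℝⁿ with ‖λ‖ = 1, let C_λ = {(x,y) : ‖y‖ ≤ λᵀx}. Then C_λ is a maximal S-free set: int(C_λ) ∩ S = ∅ and any closed convex set properly containing C_λ has interior intersecting S. -/
open RealInnerProductSpace

/-- In a nontrivial Euclidean space, every vector `v` admits a unit vector `u`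
with `⟪u, v⟫ = ‖v‖`. -/
lemma exists_unit_dual {m : ℕ} (hm : 0 < m) (v : EuclideanSpace ℝ (Fin m)) :
    ∃ u : EuclideanSpace ℝ (Fin m), ‖u‖ = 1 ∧ ⟪u, v⟫ = ‖v‖ := by
  by_cases hv : v = 0
  · refine ⟨EuclideanSpace.single ⟨0, hm⟩ 1, ?_, ?_⟩
    · simp [EuclideanSpace.norm_single]
    · simp [hv]
  · have hv' : ‖v‖ ≠ 0 := norm_ne_zero_iff.mpr hv
    refine ⟨‖v‖⁻¹ • v, ?_, ?_⟩
    · rw [norm_smul, norm_inv, norm_norm, inv_mul_cancel₀ hv']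
    · rw [real_inner_smul_left, real_inner_self_eq_norm_sq]
      field_simp

set_option maxHeartbeats 1600000 in
theorem maxhomo_maximal_free {n m : ℕ} (hn : 0 < n) (hm : 0 < m)
    (lam : EuclideanSpace ℝ (Fin n)) (hlam : ‖lam‖ = 1)
    (S C : Set (EuclideanSpace ℝ (Fin n) × EuclideanSpace ℝ (Fin m)))
    (hS : S = {p | ‖p.1‖ ≤ ‖p.2‖})
    (hC : C = {p | ‖p.2‖ ≤ ⟪lam, p.1⟫}) :
    interior C ∩ S = ∅ ∧
    ∀ C' : Set (EuclideanSpace ℝ (Fin n) × EuclideanSpace ℝ (Fin m)),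
      IsClosed C' → Convex ℝ C' → C ⊆ C' → C ≠ C' →
      (interior C' ∩ S).Nonempty := by
  subst hS hC
  constructor
  · -- Part 1: interior C ∩ S = ∅
    rw [Set.eq_empty_iff_forall_notMem]
    rintro p ⟨hpI, hpS⟩
    simp only [Set.mem_setOf_eq] at hpS
    have hpC : ‖p.2‖ ≤ ⟪lam, p.1⟫ := by
      have := interior_subset hpI
      simpa using this
    have hcs : ⟪lam, p.1⟫ ≤ ‖p.1‖ := by
      calc ⟪lam, p.1⟫ ≤ ‖lam‖ * ‖p.1‖ := real_inner_le_norm _ _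
        _ = ‖p.1‖ := by rw [hlam, one_mul]
    obtain ⟨ε, hε, hball⟩ := Metric.isOpen_iff.mp isOpen_interior p hpI
    obtain ⟨u, hu1, huv⟩ := exists_unit_dual hm p.2
    set q : EuclideanSpace ℝ (Fin n) × EuclideanSpace ℝ (Fin m) :=
      (p.1, p.2 + (ε / 2) • u) with hqdef
    have hqball : q ∈ Metric.ball p ε := by
      rw [Metric.mem_ball, Prod.dist_eq]
      have h1 : dist q.1 p.1 = 0 := by simp [hqdef]
      have h2 : dist q.2 p.2 = ε / 2 := by
        simp [hqdef, dist_eq_norm, norm_smul, abs_of_nonneg hε.le, hu1]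
      rw [h1, h2]
      simp only [max_le_iff, sup_lt_iff]
      constructor <;> linarith
    have hqC : ‖q.2‖ ≤ ⟪lam, q.1⟫ := by
      have := interior_subset (hball hqball)
      simpa using this
    have hq2 : ‖p.2‖ + ε / 2 ≤ ‖q.2‖ := by
      have hin : ⟪u, q.2⟫ = ‖p.2‖ + ε / 2 := by
        have huu : ⟪u, u⟫ = 1 := by
          rw [real_inner_self_eq_norm_sq, hu1]; norm_num
        simp only [hqdef, inner_add_right, real_inner_smul_right, huv, huu]
        ring
      calc ‖p.2‖ + ε / 2 = ⟪u, q.2⟫ := hin.symm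
        _ ≤ ‖u‖ * ‖q.2‖ := real_inner_le_norm _ _
        _ = ‖q.2‖ := by rw [hu1, one_mul]
    have hq1 : ⟪lam, q.1⟫ = ⟪lam, p.1⟫ := rfl
    linarith
  · -- Part 2: maximality
    intro C' hclosed hconv hsub hne
    obtain ⟨z, hzC', hzC⟩ := Set.exists_of_ssubset (ssubset_of_subset_of_ne hsub hne)
    simp only [Set.mem_setOf_eq, not_le] at hzC
    set δ : ℝ := ‖z.2‖ - ⟪lam, z.1⟫ with hδdef
    have hδ : 0 < δ := by simp only [hδdef]; linarith
    obtain ⟨u, hu1, huv⟩ := exists_unit_dual hm z.2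
    set R : ℝ := max 1 ((‖z.1‖ ^ 2 + 1) / (2 * δ)) with hRdef
    have hR1 : (1 : ℝ) ≤ R := le_max_left _ _
    have hR0 : (0 : ℝ) < R := lt_of_lt_of_le one_pos hR1
    have hRδ : ‖z.1‖ ^ 2 + 1 ≤ 2 * R * δ := by
      have h := le_max_right 1 ((‖z.1‖ ^ 2 + 1) / (2 * δ))
      rw [div_le_iff₀ (by positivity)] at h
      calc ‖z.1‖ ^ 2 + 1 ≤ R * (2 * δ) := h
        _ = 2 * R * δ := by ring
    set c : EuclideanSpace ℝ (Fin n) × EuclideanSpace ℝ (Fin m) := (R • lam, R • u) with hcdef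
    have hcC : c ∈ {p : EuclideanSpace ℝ (Fin n) × EuclideanSpace ℝ (Fin m) |
        ‖p.2‖ ≤ ⟪lam, p.1⟫} := by
      simp only [hcdef, Set.mem_setOf_eq, norm_smul, real_inner_smul_right]
      rw [real_inner_self_eq_norm_sq, hlam, hu1, Real.norm_eq_abs, abs_of_pos hR0]
      norm_num
    set q : EuclideanSpace ℝ (Fin n) × EuclideanSpace ℝ (Fin m) :=
      (1 / 2 : ℝ) • c + (1 / 2 : ℝ) • z with hqdef
    have hqC' : q ∈ C' := hconv (hsub hcC) hzC' (by norm_num) (by norm_num) (by norm_num)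
    have hq1 : q.1 = (R / 2 : ℝ) • lam + (1 / 2 : ℝ) • z.1 := by
      simp [hqdef, hcdef, smul_smul]; ring_nf
    have hq2 : q.2 = (R / 2 : ℝ) • u + (1 / 2 : ℝ) • z.2 := by
      simp [hqdef, hcdef, smul_smul]; ring_nf
    -- lower bound for ‖q.2‖
    have hq2norm : (R + ‖z.2‖) / 2 ≤ ‖q.2‖ := by
      have huu : ⟪u, u⟫ = 1 := by rw [real_inner_self_eq_norm_sq, hu1]; norm_num
      have hin : ⟪u, q.2⟫ = (R + ‖z.2‖) / 2 := by
        rw [hq2, inner_add_right, real_inner_smul_right, real_inner_smul_right, huu, huv]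
        ring
      calc (R + ‖z.2‖) / 2 = ⟪u, q.2⟫ := hin.symm
        _ ≤ ‖u‖ * ‖q.2‖ := real_inner_le_norm _ _
        _ = ‖q.2‖ := by rw [hu1, one_mul]
    -- exact value of ‖q.1‖ ^ 2
    have hq1norm : ‖q.1‖ ^ 2 = (R ^ 2 + 2 * R * ⟪lam, z.1⟫ + ‖z.1‖ ^ 2) / 4 := by
      rw [hq1, norm_add_sq_real, real_inner_smul_left, real_inner_smul_right,
        norm_smul, norm_smul, hlam]
      simp only [Real.norm_eq_abs, abs_of_pos hR0, abs_of_pos (show (0:ℝ) < R/2 by linarith),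
        show |(1 / 2 : ℝ)| = 1 / 2 by norm_num]
      ring
    have hqlt : ‖q.1‖ < ‖q.2‖ := by
      have h2 : ((R + ‖z.2‖) / 2) ^ 2 ≤ ‖q.2‖ ^ 2 := by
        apply pow_le_pow_left₀ (by positivity) hq2norm
      have hkey : ‖q.1‖ ^ 2 < ‖q.2‖ ^ 2 := by
        rw [hq1norm]
        have : ((R + ‖z.2‖) / 2) ^ 2 = (R ^ 2 + 2 * R * ‖z.2‖ + ‖z.2‖ ^ 2) / 4 := by ring
        rw [this] at h2
        nlinarith [sq_nonneg (‖z.2‖), hRδ, h2]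
      exact lt_of_pow_lt_pow_left₀ 2 (norm_nonneg _) hkey
    set d : ℝ := ‖q.2‖ - ‖q.1‖ with hddef
    have hd : 0 < d := by simp only [hddef]; linarith
    -- the interior point w = (lam, 0)
    set w : EuclideanSpace ℝ (Fin n) × EuclideanSpace ℝ (Fin m) := (lam, 0) with hwdef
    have hUopen : IsOpen {p : EuclideanSpace ℝ (Fin n) × EuclideanSpace ℝ (Fin m) |
        ‖p.2‖ < ⟪lam, p.1⟫} :=
      isOpen_lt (continuous_norm.comp continuous_snd) (continuous_const.inner continuous_fst)
    have hUsub : {p : EuclideanSpace ℝ (Fin n) × EuclideanSpace ℝ (Fin m) |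
        ‖p.2‖ < ⟪lam, p.1⟫} ⊆ C' := by
      intro p hp
      apply hsub
      simp only [Set.mem_setOf_eq] at hp ⊢
      exact le_of_lt hp
    have hwint : w ∈ interior C' := by
      apply interior_maximal hUsub hUopen
      simp only [hwdef, Set.mem_setOf_eq, norm_zero]
      rw [real_inner_self_eq_norm_sq, hlam]
      norm_num
    -- mix
    set a : ℝ := min d 1 / 2 with hadef
    have ha0 : 0 < a := by simp only [hadef]; positivity
    have had : a ≤ d / 2 := by
      simp only [hadef]
      have := min_le_left d 1
      linarith
    have ha1 : a ≤ 1 / 2 := by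
      simp only [hadef]
      have := min_le_right d 1
      linarith
    clear_value δ R c q d w a
    refine ⟨a • w + (1 - a) • q, ?_, ?_⟩
    · exact hconv.combo_interior_self_mem_interior hwint hqC' ha0 (by linarith) (by ring)
    · simp only [Set.mem_setOf_eq]
      have hp1 : (a • w + (1 - a) • q).1 = a • lam + (1 - a) • q.1 := by
        simp [hwdef]
      have hp2 : (a • w + (1 - a) • q).2 = (1 - a) • q.2 := by
        simp [hwdef]
      rw [hp1, hp2]
      have h1 : ‖a • lam + (1 - a) • q.1‖ ≤ a + (1 - a) * ‖q.1‖ := by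
        calc ‖a • lam + (1 - a) • q.1‖ ≤ ‖a • lam‖ + ‖(1 - a) • q.1‖ := norm_add_le _ _
          _ = a + (1 - a) * ‖q.1‖ := by
            rw [norm_smul, norm_smul, hlam, Real.norm_eq_abs, Real.norm_eq_abs,
              abs_of_pos ha0, abs_of_nonneg (by linarith : (0:ℝ) ≤ 1 - a)]
            ring
      have h2 : ‖(1 - a) • q.2‖ = (1 - a) * ‖q.2‖ := by
        rw [norm_smul, Real.norm_eq_abs, abs_of_nonneg (by linarith : (0:ℝ) ≤ 1 - a)]
      rw [h2]
      have hdq : ‖q.2‖ = ‖q.1‖ + d := by simp only [hddef]; ring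
      have key : a ≤ (1 - a) * d := by
        have h3 : (1 / 2 : ℝ) ≤ 1 - a := by linarith
        have h4 : (1 / 2 : ℝ) * d ≤ (1 - a) * d := mul_le_mul_of_nonneg_right h3 hd.le
        linarith
      calc ‖a • lam + (1 - a) • q.1‖ ≤ a + (1 - a) * ‖q.1‖ := h1
        _ ≤ (1 - a) * ‖q.1‖ + (1 - a) * d := by linarith
        _ = (1 - a) * (‖q.1‖ + d) := by ring
        _ = (1 - a) * ‖q.2‖ := by rw [← hdq]
end

section
/- Let a, λ ∈ ℝⁿ with ‖a‖ = ‖λ‖ = 1, d ∈ ℝᵐ with ‖d‖ ≤ 1, y ∈ ℝᵐ, and θ ≥ 0. If ‖x‖ ≤ ‖y‖ and aᵀx + dᵀy ≤ 0, then λᵀ(x + aθ) ≤ ‖y − dθ‖. -/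
open RealInnerProductSpace

/- Squaring, ‖x + θ a‖² - ‖y - θ d‖² = (‖x‖² - ‖y‖²) + 2θ(⟪a, x⟫ + ⟪d, y⟫) + θ²(‖a‖² - ‖d‖²),
and each of the three terms is nonpositive. -/
theorem norm_add_smul_le_norm_sub_smul {E F : Type*}
    [NormedAddCommGroup E] [InnerProductSpace ℝ E] [NormedAddCommGroup F] [InnerProductSpace ℝ F]
    {a x : E} {d y : F} {θ : ℝ} (hθ : 0 ≤ θ) (hxy : ‖x‖ ≤ ‖y‖) (had : ‖a‖ ≤ ‖d‖)
    (hlin : ⟪a, x⟫ + ⟪d, y⟫ ≤ 0) :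
    ‖x + θ • a‖ ≤ ‖y - θ • d‖ := by
  rw [← sq_le_sq₀ (norm_nonneg _) (norm_nonneg _), norm_add_sq_real, norm_sub_sq_real,
    inner_smul_right, inner_smul_right, norm_smul, norm_smul, Real.norm_of_nonneg hθ,
    real_inner_comm a, real_inner_comm d]
  have hx2 : ‖x‖ ^ 2 ≤ ‖y‖ ^ 2 := pow_le_pow_left₀ (norm_nonneg x) hxy 2
  have ha2 : ‖a‖ ^ 2 ≤ ‖d‖ ^ 2 := pow_le_pow_left₀ (norm_nonneg a) had 2
  nlinarith [mul_le_mul_of_nonneg_left ha2 (sq_nonneg θ), mul_le_mul_of_nonneg_left hlin hθ]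

theorem key_freeness_inequality {n m : ℕ}
    (a lam : EuclideanSpace ℝ (Fin n)) (d : EuclideanSpace ℝ (Fin m))
    (hlam : ‖lam‖ = 1) (had : ‖a‖ ≤ ‖d‖)
    (x : EuclideanSpace ℝ (Fin n)) (y : EuclideanSpace ℝ (Fin m))
    (θ : ℝ) (hθ : 0 ≤ θ)
    (hxy : ‖x‖ ≤ ‖y‖) (hlin : ⟪a, x⟫ + ⟪d, y⟫ ≤ 0) :
    ⟪lam, x + θ • a⟫ ≤ ‖y - θ • d‖ :=
  calc ⟪lam, x + θ • a⟫ ≤ ‖lam‖ * ‖x + θ • a‖ := real_inner_le_norm _ _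
    _ = ‖x + θ • a‖ := by rw [hlam, one_mul]
    _ ≤ ‖y - θ • d‖ := norm_add_smul_le_norm_sub_smul hθ hxy had hlin
end

section
/- Let λ, a ∈ ℝⁿ with ‖λ‖ = ‖a‖ = 1 and d ∈ ℝᵐ with ‖d‖ ≤ 1. Define φ_λ(y) = max{λᵀx : ‖x‖ ≤ ‖y‖, aᵀx + dᵀy ≤ 0}. Then φ_λ(y) = ‖y‖ if λᵀa‖y‖ + dᵀy ≤ 0, and φ_λ(y) = sqrt((‖y‖² − (dᵀy)²)(1 − (λᵀa)²)) − (dᵀy)(λᵀa) otherwise. -/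
/-!
Split `x` into its component `u = ⟪a, x⟫` along `a` and the part orthogonal to `a`. With
`c = ⟪λ, a⟫`, Cauchy–Schwarz on the orthogonal parts gives
`⟪λ, x⟫ ≤ c u + √(1 - c²) √(R² - u²)` for `‖x‖ ≤ R`, with equality attainable, so the problem
reduces to maximizing this function of `u` over `-R ≤ u ≤ -β` (here `R = ‖y‖`, `β = ⟪d, y⟫`).
It increases up to `u = c R`, where it equals `R`; so the maximum is `R` when `c R ≤ -β`,
and its value at `u = -β` otherwise.
-/

open RealInnerProductSpace Set

theorem sqrt_one_sub_sq_mul_le {c t R : ℝ} (hR : 0 ≤ R) (hc : c ^ 2 ≤ 1) (ht : t ≤ c * R)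
    (htR : t ^ 2 ≤ R ^ 2) : √(1 - c ^ 2) * t ≤ c * √(R ^ 2 - t ^ 2) := by
  set s := √(1 - c ^ 2)
  set A := √(R ^ 2 - t ^ 2)
  have hs : 0 ≤ s := Real.sqrt_nonneg _
  have hA : 0 ≤ A := Real.sqrt_nonneg _
  have hs2 : s ^ 2 = 1 - c ^ 2 := Real.sq_sqrt (by linarith)
  have hA2 : A ^ 2 = R ^ 2 - t ^ 2 := Real.sq_sqrt (by linarith)
  rcases le_or_gt t 0 with ht0 | ht0
  · rcases le_or_gt 0 c with hc | hc
    · nlinarith [mul_nonneg hc hA, mul_nonneg hs (neg_nonneg.mpr ht0)]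
    · have hcR : c * R ≤ 0 := mul_nonpos_of_nonpos_of_nonneg hc.le hR
      have : (-c * A) ^ 2 ≤ (s * -t) ^ 2 := by
        nlinarith [mul_nonneg (sub_nonneg.mpr ht) (by linarith : 0 ≤ -(c * R) - t)]
      nlinarith [(sq_le_sq₀ (by nlinarith) (by nlinarith)).mp this]
  · have hc : 0 < c := pos_of_mul_pos_left (ht0.trans_le ht) hR
    have : (s * t) ^ 2 ≤ (c * A) ^ 2 := by nlinarith
    exact (sq_le_sq₀ (by positivity) (by positivity)).mp this

theorem monotoneOn_mul_add_sqrt_mul_sqrt {c R : ℝ} (hR : 0 ≤ R) (hc : c ^ 2 ≤ 1) :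
    MonotoneOn (fun t ↦ c * t + √(1 - c ^ 2) * √(R ^ 2 - t ^ 2)) (Icc (-R) (c * R)) := by
  have hcR : c * R ≤ R := mul_le_of_le_one_left hR (by nlinarith)
  have sq_le : ∀ t ∈ Icc (-R) (c * R), t ^ 2 ≤ R ^ 2 := fun t ht ↦ by nlinarith [ht.1, ht.2]
  intro u hu v hv huv
  have hsu := sqrt_one_sub_sq_mul_le hR hc hu.2 (sq_le u hu)
  have hsv := sqrt_one_sub_sq_mul_le hR hc hv.2 (sq_le v hv)
  dsimp only
  set s := √(1 - c ^ 2)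
  set A := √(R ^ 2 - u ^ 2)
  set P := √(R ^ 2 - v ^ 2)
  have hs : 0 ≤ s := Real.sqrt_nonneg _
  have hA : 0 ≤ A := Real.sqrt_nonneg _
  have hP : 0 ≤ P := Real.sqrt_nonneg _
  have hA2 : A ^ 2 = R ^ 2 - u ^ 2 := Real.sq_sqrt (by linarith [sq_le u hu])
  have hP2 : P ^ 2 = R ^ 2 - v ^ 2 := Real.sq_sqrt (by linarith [sq_le v hv])
  -- `A² - P² = v² - u²` turns the claim into `c (A + P) ≥ s (u + v)` once `A + P > 0`
  have key : (A + P) * (c * (v - u) - s * (A - P)) = (v - u) * (c * (A + P) - s * (u + v)) := by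
    linear_combination (-s) * (hA2 - hP2)
  rcases (add_nonneg hA hP).eq_or_lt with hAP | hAP
  · have hA0 : A = 0 := by linarith
    have hP0 : P = 0 := by linarith
    rw [hA0, hP0]
    rcases sq_eq_sq_iff_eq_or_eq_neg.mp (by nlinarith : u ^ 2 = v ^ 2) with h | h
    · rw [h]
    · have hv0 : 0 ≤ v := by linarith
      rcases le_or_gt 0 c with hc0 | hc0
      · nlinarith [mul_nonneg hc0 hv0]
      · nlinarith [mul_nonpos_of_nonpos_of_nonneg hc0.le hR, hv.2]
  · nlinarith [mul_nonneg (sub_nonneg.mpr huv) (sub_nonneg.mpr (add_le_add hsu hsv))]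

section
variable {E : Type*} [NormedAddCommGroup E] [InnerProductSpace ℝ E] {a : E}

theorem norm_sub_inner_smul_eq_sqrt (ha : ‖a‖ = 1) (x : E) :
    ‖x - ⟪a, x⟫ • a‖ = √(‖x‖ ^ 2 - ⟪a, x⟫ ^ 2) := by
  rw [← Real.sqrt_sq (norm_nonneg _), norm_sub_sq_real, real_inner_smul_right, norm_smul, ha,
    Real.norm_eq_abs, mul_one, sq_abs, real_inner_comm x]
  ring_nf

theorem inner_eq_mul_add_inner_sub_smul (ha : ‖a‖ = 1) (lam x : E) :
    ⟪lam, x⟫ = ⟪lam, a⟫ * ⟪a, x⟫ + ⟪lam - ⟪lam, a⟫ • a, x - ⟪a, x⟫ • a⟫ := by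
  have haa : ⟪a, a⟫ = 1 := by rw [real_inner_self_eq_norm_sq, ha, one_pow]
  simp only [inner_sub_left, inner_sub_right, real_inner_smul_left, real_inner_smul_right, haa]
  ring

theorem inner_le_mul_add_sqrt_mul_sqrt {lam x : E} {R : ℝ} (hlam : ‖lam‖ = 1) (ha : ‖a‖ = 1)
    (hx : ‖x‖ ≤ R) :
    ⟪lam, x⟫ ≤ ⟪lam, a⟫ * ⟪a, x⟫ + √(1 - ⟪lam, a⟫ ^ 2) * √(R ^ 2 - ⟪a, x⟫ ^ 2) := by
  have hw : ‖lam - ⟪lam, a⟫ • a‖ = √(1 - ⟪lam, a⟫ ^ 2) := by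
    rw [real_inner_comm, norm_sub_inner_smul_eq_sqrt ha, hlam, one_pow]
  have hx' : ‖x - ⟪a, x⟫ • a‖ ≤ √(R ^ 2 - ⟪a, x⟫ ^ 2) := by
    rw [norm_sub_inner_smul_eq_sqrt ha]
    gcongr
  calc ⟪lam, x⟫ = ⟪lam, a⟫ * ⟪a, x⟫ + ⟪lam - ⟪lam, a⟫ • a, x - ⟪a, x⟫ • a⟫ :=
        inner_eq_mul_add_inner_sub_smul ha lam x
    _ ≤ _ := by
      gcongr
      exact (real_inner_le_norm _ _).trans (hw ▸ mul_le_mul_of_nonneg_left hx' (norm_nonneg _))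

variable {lam : E} {R β : ℝ}

theorem isGreatest_inner_of_mul_add_nonpos (hlam : ‖lam‖ = 1) (hR : 0 ≤ R)
    (h : ⟪lam, a⟫ * R + β ≤ 0) :
    IsGreatest {r : ℝ | ∃ x : E, ‖x‖ ≤ R ∧ ⟪a, x⟫ + β ≤ 0 ∧ r = ⟪lam, x⟫} R := by
  refine ⟨⟨R • lam, ?_, ?_, ?_⟩, ?_⟩
  · rw [norm_smul, hlam, Real.norm_of_nonneg hR, mul_one]
  · rw [real_inner_smul_right, real_inner_comm]
    linarith
  · rw [real_inner_smul_right, real_inner_self_eq_norm_sq, hlam]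
    ring
  · rintro _ ⟨x, hx, -, rfl⟩
    calc ⟪lam, x⟫ ≤ ‖lam‖ * ‖x‖ := real_inner_le_norm _ _
      _ ≤ R := by rwa [hlam, one_mul]

theorem isGreatest_inner_of_nonneg_mul_add (hlam : ‖lam‖ = 1) (ha : ‖a‖ = 1) (hβ : |β| ≤ R)
    (h : 0 ≤ ⟪lam, a⟫ * R + β) :
    IsGreatest {r : ℝ | ∃ x : E, ‖x‖ ≤ R ∧ ⟪a, x⟫ + β ≤ 0 ∧ r = ⟪lam, x⟫}
      (√((R ^ 2 - β ^ 2) * (1 - ⟪lam, a⟫ ^ 2)) - β * ⟪lam, a⟫) := by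
  set c := ⟪lam, a⟫
  have hR : 0 ≤ R := (abs_nonneg β).trans hβ
  have hβ2 : β ^ 2 ≤ R ^ 2 := sq_le_sq' (abs_le.mp hβ).1 (abs_le.mp hβ).2
  have hc : c ^ 2 ≤ 1 := by
    have := abs_real_inner_le_norm lam a
    rw [hlam, ha, one_mul] at this
    exact sq_le_one_iff_abs_le_one c |>.mpr this
  set s := √(1 - c ^ 2)
  set P := √(R ^ 2 - β ^ 2)
  rw [show √((R ^ 2 - β ^ 2) * (1 - c ^ 2)) - β * c = c * -β + s * P by
    rw [Real.sqrt_mul (by linarith)]; ring]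
  have hs : 0 ≤ s := Real.sqrt_nonneg _
  have hs2 : s ^ 2 = 1 - c ^ 2 := Real.sq_sqrt (by linarith)
  have hP2 : P ^ 2 = R ^ 2 - β ^ 2 := Real.sq_sqrt (by linarith)
  have haa : ⟪a, a⟫ = 1 := by rw [real_inner_self_eq_norm_sq, ha, one_pow]
  have hw : ‖lam - c • a‖ = s := by
    have := norm_sub_inner_smul_eq_sqrt ha lam
    rwa [real_inner_comm, hlam, one_pow] at this
  set w := lam - c • a
  have haw : ⟪a, w⟫ = 0 := by
    rw [inner_sub_right, real_inner_smul_right, haa, real_inner_comm]; ring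
  have hlw : ⟪lam, w⟫ = s ^ 2 := by
    rw [inner_sub_right, real_inner_smul_right, real_inner_self_eq_norm_sq, hlam, hs2]; ring
  have hPs : (P / s) ^ 2 * s ^ 2 ≤ P ^ 2 := by
    rcases hs.eq_or_lt with h0 | h0
    · rw [← h0]; simp [sq_nonneg]
    · rw [div_pow, div_mul_cancel₀ _ (by positivity)]
  have hPs' : P / s * s ^ 2 = s * P := by
    rcases hs.eq_or_lt with h0 | h0
    · rw [← h0]; ring
    · field_simp
  -- when `s = 0` the quotient `P / s` is junk, but then `w = 0` and `P / s` plays no role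
  refine ⟨⟨(-β) • a + (P / s) • w, ?_, ?_, ?_⟩, ?_⟩
  · have horth : ⟪(-β) • a, (P / s) • w⟫ = 0 := by
      rw [real_inner_smul_left, real_inner_smul_right, haw]; ring
    refine (sq_le_sq₀ (norm_nonneg _) hR).mp ?_
    rw [sq, norm_add_sq_eq_norm_sq_add_norm_sq_real horth, ← sq, ← sq, norm_smul, norm_smul, ha,
      hw, mul_pow, mul_pow, Real.norm_eq_abs, Real.norm_eq_abs, sq_abs, sq_abs]
    linarith
  · rw [inner_add_right, real_inner_smul_right, real_inner_smul_right, haa, haw]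
    linarith
  · rw [inner_add_right, real_inner_smul_right, real_inner_smul_right, hlw, hPs']
    ring
  · rintro _ ⟨x, hx, hxβ, rfl⟩
    have hu : |⟪a, x⟫| ≤ R := by
      have := abs_real_inner_le_norm a x
      rw [ha, one_mul] at this
      exact this.trans hx
    calc ⟪lam, x⟫ ≤ c * ⟪a, x⟫ + s * √(R ^ 2 - ⟪a, x⟫ ^ 2) :=
          inner_le_mul_add_sqrt_mul_sqrt hlam ha hx
      _ ≤ c * -β + s * √(R ^ 2 - (-β) ^ 2) :=
          monotoneOn_mul_add_sqrt_mul_sqrt hR hc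
            (show ⟪a, x⟫ ∈ Icc (-R) (c * R) from ⟨(abs_le.mp hu).1, by linarith⟩)
            (show -β ∈ Icc (-R) (c * R) from ⟨by linarith [(abs_le.mp hβ).2], by linarith⟩)
            (by linarith)
      _ = c * -β + s * P := by rw [neg_sq]

end

theorem phi_closed_form {n m : ℕ}
    (lam a : EuclideanSpace ℝ (Fin n)) (d : EuclideanSpace ℝ (Fin m))
    (hlam : ‖lam‖ = 1) (ha : ‖a‖ = 1) (hd : ‖d‖ ≤ 1)
    (y : EuclideanSpace ℝ (Fin m)) :
    IsGreatest {r : ℝ | ∃ x : EuclideanSpace ℝ (Fin n),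
        ‖x‖ ≤ ‖y‖ ∧ ⟪a, x⟫ + ⟪d, y⟫ ≤ 0 ∧ r = ⟪lam, x⟫}
      (if ⟪lam, a⟫ * ‖y‖ + ⟪d, y⟫ ≤ 0 then ‖y‖
       else Real.sqrt ((‖y‖ ^ 2 - ⟪d, y⟫ ^ 2) * (1 - ⟪lam, a⟫ ^ 2)) - ⟪d, y⟫ * ⟪lam, a⟫) := by
  have hdy : |⟪d, y⟫| ≤ ‖y‖ :=
    (abs_real_inner_le_norm d y).trans (mul_le_of_le_one_left (norm_nonneg y) hd)
  split_ifs with h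
  · exact isGreatest_inner_of_mul_add_nonpos hlam (norm_nonneg y) h
  · exact isGreatest_inner_of_nonneg_mul_add hlam ha hdy (not_le.mp h).le
end

section
/- Let λ, a ∈ ℝⁿ with ‖λ‖ = ‖a‖ = 1 and d ∈ ℝᵐ with ‖d‖ ≤ 1. The function φ_λ : ℝᵐ → ℝ defined by φ_λ(y) = ‖y‖ if λᵀa‖y‖ + dᵀy ≤ 0 and φ_λ(y) = sqrt((‖y‖² − (dᵀy)²)(1 − (λᵀa)²)) − (dᵀy)(λᵀa) otherwise, is sublinear (convex and positively homogeneous). -/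
/-!
Write `c = ⟪lam, a⟫ ∈ [-1, 1]` and `N y = √(‖y‖ ^ 2 - ⟪d, y⟫ ^ 2)`. Then `φ y` is the support
function of the circular arc `{(√(1 - u ^ 2), -u) | c ≤ u ≤ 1}` at the point `(N y, ⟪d, y⟫)`, which
lies on the circle of radius `‖y‖`: the maximum is attained at `u = -⟪d, y⟫ / ‖y‖` when this lies
in `[c, 1]`, and at `u = c` otherwise. Since `‖d‖ ≤ 1`, `N y = ‖T y‖` for a linear square root `T`
of `1 - d ⊗ d`, so `φ` is a pointwise maximum of the convex functions
`y ↦ √(1 - u ^ 2) N y - u ⟪d, y⟫`.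
-/

open RealInnerProductSpace

section

variable {𝕜 E β ι : Type*} [Semiring 𝕜] [PartialOrder 𝕜] [AddCommMonoid E] [SMul 𝕜 E]
  [AddCommMonoid β] [PartialOrder β] [IsOrderedAddMonoid β] [Module 𝕜 β] [PosSMulMono 𝕜 β]

theorem ConvexOn.of_forall_le_of_exists_eq {s : Set E} {f : ι → E → β} {g : E → β}
    (hf : ∀ i, ConvexOn 𝕜 s (f i)) (hle : ∀ i, ∀ x ∈ s, f i x ≤ g x)
    (hex : ∀ x ∈ s, ∃ i, f i x = g x) : ConvexOn 𝕜 s g := by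
  have hs : Convex 𝕜 s := fun x hx => (hf (hex x hx).choose).1 hx
  refine ⟨hs, fun x hx y hy a b ha hb hab => ?_⟩
  obtain ⟨i, hi⟩ := hex _ (hs hx hy ha hb hab)
  calc g (a • x + b • y) = f i (a • x + b • y) := hi.symm
    _ ≤ a • f i x + b • f i y := (hf i).2 hx hy ha hb hab
    _ ≤ a • g x + b • g y := add_le_add (smul_le_smul_of_nonneg_left (hle i x hx) ha)
        (smul_le_smul_of_nonneg_left (hle i y hy) hb)

end

section

variable {c u r s A : ℝ}

theorem sqrt_one_sub_sq_mul_sub_le (hu : u ^ 2 ≤ 1) (hr : 0 ≤ r) (hArs : A ^ 2 + s ^ 2 = r ^ 2) :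
    √(1 - u ^ 2) * A - u * s ≤ r := by
  have hv : √(1 - u ^ 2) ^ 2 = 1 - u ^ 2 := Real.sq_sqrt (by linarith)
  have : (√(1 - u ^ 2) * A - u * s) ^ 2 + (√(1 - u ^ 2) * s + u * A) ^ 2 = r ^ 2 := by
    linear_combination (A ^ 2 + s ^ 2) * hv + hArs
  nlinarith [sq_nonneg (√(1 - u ^ 2) * s + u * A)]

theorem mul_sqrt_one_sub_sq_add_nonneg (hc : c ^ 2 ≤ 1) (hA : 0 ≤ A)
    (hArs : A ^ 2 + s ^ 2 = r ^ 2) (hr : 0 ≤ r) (hcrs : 0 < c * r + s) :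
    0 ≤ s * √(1 - c ^ 2) + c * A := by
  set w := √(1 - c ^ 2)
  have hw : 0 ≤ w := Real.sqrt_nonneg _
  have hw2 : w ^ 2 = 1 - c ^ 2 := Real.sq_sqrt (by linarith)
  have key : (c * A) ^ 2 - (s * w) ^ 2 = (c * r - s) * (c * r + s) := by
    linear_combination c ^ 2 * hArs - s ^ 2 * hw2
  rcases le_or_gt 0 c with hc0 | hc0
  · rcases le_or_gt 0 s with hs0 | hs0
    · positivity
    · nlinarith [mul_nonneg hc0 hA, mul_nonneg (neg_nonneg.2 hs0.le) hw]
  · have hs0 : 0 < s := by nlinarith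
    have hsw : 0 ≤ s * w := mul_nonneg hs0.le hw
    have hcA : 0 ≤ -(c * A) := by nlinarith
    nlinarith [mul_pos (by nlinarith : 0 < s - c * r) hcrs]

theorem sqrt_one_sub_sq_mul_sub_le_of_le (hc : -1 ≤ c) (hcu : c ≤ u) (hu : u ≤ 1) (hA : 0 ≤ A)
    (hr : 0 ≤ r) (hArs : A ^ 2 + s ^ 2 = r ^ 2) (hcrs : 0 < c * r + s) :
    √(1 - u ^ 2) * A - u * s ≤ √(1 - c ^ 2) * A - c * s := by
  have hc1 : c ≤ 1 := hcu.trans hu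
  have hurs : 0 < u * r + s := by nlinarith
  have hcA := mul_sqrt_one_sub_sq_add_nonneg (by nlinarith) hA hArs hr hcrs
  have huA := mul_sqrt_one_sub_sq_add_nonneg (by nlinarith) hA hArs hr hurs
  set v := √(1 - u ^ 2)
  set w := √(1 - c ^ 2)
  have hv2 : v ^ 2 = 1 - u ^ 2 := Real.sq_sqrt (by nlinarith)
  have hw2 : w ^ 2 = 1 - c ^ 2 := Real.sq_sqrt (by nlinarith)
  -- `w ^ 2 - v ^ 2 = u ^ 2 - c ^ 2` lets the difference of the two sides factor through `u - c`.
  have key : (w + v) * ((w - v) * A + (u - c) * s) =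
      (u - c) * ((s * w + c * A) + (s * v + u * A)) := by
    linear_combination A * hw2 - A * hv2
  rcases hc1.lt_or_eq with hc1 | rfl
  · have hsr : s ≤ r := by nlinarith
    have hc0 : -1 < c := by nlinarith
    have hw : 0 < w := Real.sqrt_pos.2 (by nlinarith)
    have hv : 0 ≤ v := Real.sqrt_nonneg _
    nlinarith [mul_nonneg (sub_nonneg.2 hcu) (add_nonneg hcA huA)]
  · obtain rfl : u = 1 := le_antisymm hu hcu
    rfl

/-- The support function of the arc `{(√(1 - u ^ 2), -u) | c ≤ u ≤ 1}` at a point `(A, s)` with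
`A ≥ 0` and `r = √(A ^ 2 + s ^ 2)`. -/
noncomputable def arcSupport (c r s : ℝ) : ℝ :=
  if c * r + s ≤ 0 then r else √((r ^ 2 - s ^ 2) * (1 - c ^ 2)) - s * c

theorem arcSupport_of_pos (hA : 0 ≤ A) (hArs : A ^ 2 + s ^ 2 = r ^ 2) (hcrs : 0 < c * r + s) :
    arcSupport c r s = √(1 - c ^ 2) * A - c * s := by
  rw [arcSupport, if_neg hcrs.not_ge, show r ^ 2 - s ^ 2 = A ^ 2 by linarith,
    Real.sqrt_mul (sq_nonneg A), Real.sqrt_sq hA]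
  ring

theorem le_arcSupport (hc : -1 ≤ c) (hu : u ∈ Set.Icc c 1) (hA : 0 ≤ A) (hr : 0 ≤ r)
    (hArs : A ^ 2 + s ^ 2 = r ^ 2) : √(1 - u ^ 2) * A - u * s ≤ arcSupport c r s := by
  by_cases hcrs : c * r + s ≤ 0
  · rw [arcSupport, if_pos hcrs]
    exact sqrt_one_sub_sq_mul_sub_le (by nlinarith [hu.1, hu.2]) hr hArs
  · rw [arcSupport_of_pos hA hArs (not_le.1 hcrs)]
    exact sqrt_one_sub_sq_mul_sub_le_of_le hc hu.1 hu.2 hA hr hArs (not_le.1 hcrs)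

theorem exists_eq_arcSupport (hc : c ≤ 1) (hA : 0 ≤ A) (hr : 0 ≤ r)
    (hArs : A ^ 2 + s ^ 2 = r ^ 2) :
    ∃ u ∈ Set.Icc c 1, √(1 - u ^ 2) * A - u * s = arcSupport c r s := by
  by_cases hcrs : c * r + s ≤ 0
  · rw [arcSupport, if_pos hcrs]
    rcases hr.eq_or_lt with rfl | hr
    · refine ⟨c, ⟨le_rfl, hc⟩, ?_⟩
      obtain ⟨rfl, rfl⟩ : A = 0 ∧ s = 0 := by constructor <;> nlinarith
      ring
    · -- the maximiser is the point of the arc in the direction of `(A, s)`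
      refine ⟨-s / r, ⟨by rw [le_div_iff₀ hr]; linarith, by rw [div_le_one hr]; nlinarith⟩, ?_⟩
      have : 1 - (-s / r) ^ 2 = (A / r) ^ 2 := by field_simp; linarith
      rw [this, Real.sqrt_sq (by positivity)]
      field_simp
      linarith
  · exact ⟨c, ⟨le_rfl, hc⟩, (arcSupport_of_pos hA hArs (not_le.1 hcrs)).symm⟩

theorem arcSupport_mul {t : ℝ} (ht : 0 ≤ t) :
    arcSupport c (t * r) (t * s) = t * arcSupport c r s := by
  rcases ht.eq_or_lt with rfl | ht
  · simp [arcSupport]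
  have hcond : c * (t * r) + t * s ≤ 0 ↔ c * r + s ≤ 0 := by
    rw [show c * (t * r) + t * s = t * (c * r + s) by ring]
    exact smul_nonpos_iff_nonpos_of_pos_left ht
  rw [arcSupport, arcSupport, if_congr hcond rfl rfl]
  split_ifs
  · rfl
  · rw [show ((t * r) ^ 2 - (t * s) ^ 2) * (1 - c ^ 2) =
        t ^ 2 * ((r ^ 2 - s ^ 2) * (1 - c ^ 2)) by ring,
      Real.sqrt_mul (sq_nonneg t), Real.sqrt_sq ht.le]
    ring

end

section

variable {E F : Type*} [NormedAddCommGroup E] [InnerProductSpace ℝ E]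
  [NormedAddCommGroup F] [InnerProductSpace ℝ F]

/-- A square root of the positive operator `1 - d ⊗ d` for `‖d‖ ≤ 1`: the coefficient
`k = (1 + √(1 - ‖d‖ ^ 2))⁻¹` is a root of `‖d‖ ^ 2 k ^ 2 - 2 k + 1 = 0`. -/
noncomputable def sqrtIdSubRankOne (d : E) : E →ₗ[ℝ] E :=
  LinearMap.id - (1 + √(1 - ‖d‖ ^ 2))⁻¹ • (innerₛₗ ℝ d).smulRight d

theorem sqrtIdSubRankOne_apply (d y : E) :
    sqrtIdSubRankOne d y = y - ((1 + √(1 - ‖d‖ ^ 2))⁻¹ * ⟪d, y⟫) • d := by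
  simp [sqrtIdSubRankOne, mul_smul]

theorem norm_sqrtIdSubRankOne_sq {d : E} (hd : ‖d‖ ≤ 1) (y : E) :
    ‖sqrtIdSubRankOne d y‖ ^ 2 + ⟪d, y⟫ ^ 2 = ‖y‖ ^ 2 := by
  have hw : 0 ≤ √(1 - ‖d‖ ^ 2) := Real.sqrt_nonneg _
  have hw2 : √(1 - ‖d‖ ^ 2) ^ 2 = 1 - ‖d‖ ^ 2 := Real.sq_sqrt (by nlinarith [norm_nonneg d])
  rw [sqrtIdSubRankOne_apply, norm_sub_sq_real, real_inner_smul_right, norm_smul,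
    Real.norm_eq_abs, mul_pow, sq_abs, real_inner_comm d y]
  field_simp
  linear_combination ⟪d, y⟫ ^ 2 * hw2

theorem convexOn_mul_norm_sub_mul_inner (T : E →ₗ[ℝ] F) (d : E) {a : ℝ} (ha : 0 ≤ a) (b : ℝ) :
    ConvexOn ℝ Set.univ fun y => a * ‖T y‖ - b * ⟪d, y⟫ := by
  have h : (fun y => a * ‖T y‖ - b * ⟪d, y⟫) = (fun y => a • ‖T y‖) + ⇑(-b • innerₛₗ ℝ d) := by
    ext y
    simp [sub_eq_add_neg]
  rw [h]
  exact (((convexOn_norm convex_univ).comp_linearMap T).smul ha).add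
    ((-b • innerₛₗ ℝ d).convexOn convex_univ)

end

theorem phi_sublinear {n m : ℕ}
    (lam a : EuclideanSpace ℝ (Fin n)) (d : EuclideanSpace ℝ (Fin m))
    (hlam : ‖lam‖ = 1) (ha : ‖a‖ = 1) (hd : ‖d‖ ≤ 1)
    (φ : EuclideanSpace ℝ (Fin m) → ℝ)
    (hφ : ∀ y, φ y =
      if ⟪lam, a⟫ * ‖y‖ + ⟪d, y⟫ ≤ 0 then ‖y‖
      else Real.sqrt ((‖y‖ ^ 2 - ⟪d, y⟫ ^ 2) * (1 - ⟪lam, a⟫ ^ 2)) - ⟪d, y⟫ * ⟪lam, a⟫) :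
    ConvexOn ℝ Set.univ φ ∧ ∀ t : ℝ, 0 ≤ t → ∀ y, φ (t • y) = t * φ y := by
  set c := ⟪lam, a⟫
  obtain ⟨hc₀, hc₁⟩ : -1 ≤ c ∧ c ≤ 1 :=
    abs_le.1 (by simpa [hlam, ha] using abs_real_inner_le_norm lam a)
  have hφc : ∀ y, φ y = arcSupport c ‖y‖ ⟪d, y⟫ := hφ
  set T := sqrtIdSubRankOne d
  have hT (y) := norm_sqrtIdSubRankOne_sq hd y
  refine ⟨ConvexOn.of_forall_le_of_exists_eq
    (f := fun (u : Set.Icc c 1) y => √(1 - (u : ℝ) ^ 2) * ‖T y‖ - u * ⟪d, y⟫)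
    (fun u => convexOn_mul_norm_sub_mul_inner T d (Real.sqrt_nonneg _) u)
    (fun u y _ => (hφc y).symm ▸ le_arcSupport hc₀ u.2 (norm_nonneg _) (norm_nonneg y) (hT y))
    (fun y _ => ?_), fun t ht y => ?_⟩
  · obtain ⟨u, hu, h⟩ := exists_eq_arcSupport hc₁ (norm_nonneg _) (norm_nonneg y) (hT y)
    exact ⟨⟨u, hu⟩, h.trans (hφc y).symm⟩
  · rw [hφc, hφc, norm_smul, Real.norm_of_nonneg ht, real_inner_smul_right, arcSupport_mul ht]
end

section
/- Let λ, a ∈ ℝⁿ with ‖λ‖ = ‖a‖ = 1, λ ≠ ±a, and d ∈ ℝᵐ with ‖d‖ < 1. Then the function φ_λ with φ_λ(y) = ‖y‖ if λᵀa‖y‖ + dᵀy ≤ 0, and φ_λ(y) = sqrt((‖y‖² − (dᵀy)²)(1 − (λᵀa)²)) − (dᵀy)(λᵀa) otherwise, is differentiable at every y ∈ ℝᵐ \ {0}; moreover on the set {y ≠ 0 : λᵀa‖y‖ + dᵀy = 0} both branches have gradient y/‖y‖. -/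
/-!
Write `c = ⟪λ, a⟫` (so `c² < 1`), `t = ⟪d, z⟫` and `g` for the second branch. Since
`(‖z‖ + t c)² - (‖z‖² - t²)(1 - c²) = (c ‖z‖ + t)²`, we have `g ≤ ‖·‖` everywhere, with equality
on the switching surface `c ‖z‖ + t = 0`. There `g - ‖·‖` attains a maximum, so `g` and `‖·‖` have
the same derivative; off the surface `φ` locally agrees with one smooth branch, and on it the two
branches glue to a differentiable function.
-/

open RealInnerProductSpace Filter Topology

section Pasting
variable {𝕜 : Type*} [NontriviallyNormedField 𝕜] {E F : Type*} [NormedAddCommGroup E]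
  [NormedSpace 𝕜 E] [NormedAddCommGroup F] [NormedSpace 𝕜 F]

theorem DifferentiableAt.ite_nonpos {s : E → ℝ} {f g : E → F} {y : E} (hs : ContinuousAt s y)
    (hf : DifferentiableAt 𝕜 f y) (hg : DifferentiableAt 𝕜 g y)
    (hfg : s y = 0 → f y = g y ∧ fderiv 𝕜 f y = fderiv 𝕜 g y) :
    DifferentiableAt 𝕜 (fun z => if s z ≤ 0 then f z else g z) y := by
  rcases lt_trichotomy (s y) 0 with hneg | hzero | hpos
  · refine hf.congr_of_eventuallyEq ?_
    filter_upwards [hs.eventually_lt continuousAt_const hneg] with z hz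
    exact if_pos hz.le
  · obtain ⟨hfgy, hfg'⟩ := hfg hzero
    have hle : HasFDerivWithinAt (fun z => if s z ≤ 0 then f z else g z) (fderiv 𝕜 f y)
        {z | s z ≤ 0} y :=
      hf.hasFDerivAt.hasFDerivWithinAt.congr (fun z hz => if_pos hz) (if_pos hzero.le)
    have hgt : HasFDerivWithinAt (fun z => if s z ≤ 0 then f z else g z) (fderiv 𝕜 f y)
        {z | s z ≤ 0}ᶜ y := by
      rw [hfg']
      exact hg.hasFDerivAt.hasFDerivWithinAt.congr (fun z hz => if_neg hz)
        ((if_pos hzero.le).trans hfgy)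
    have hall := hle.union hgt
    rw [Set.union_compl_self, hasFDerivWithinAt_univ] at hall
    exact hall.differentiableAt
  · refine hg.congr_of_eventuallyEq ?_
    filter_upwards [continuousAt_const.eventually_lt hs hpos] with z hz
    exact if_neg hz.not_ge

end Pasting

theorem HasFDerivAt.eq_of_eventually_le_of_eq {E : Type*} [NormedAddCommGroup E]
    [NormedSpace ℝ E] {f g : E → ℝ} {f' g' : E →L[ℝ] ℝ} {y : E} (hf : HasFDerivAt f f' y)
    (hg : HasFDerivAt g g' y) (hle : f ≤ᶠ[𝓝 y] g) (hy : f y = g y) : f' = g' := by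
  have hmax : IsLocalMax (fun z => f z - g z) y := by
    filter_upwards [hle] with z hz
    simp only [hy, sub_self, sub_nonpos, hz]
  exact sub_eq_zero.mp (hmax.hasFDerivAt_eq_zero (hf.sub hg))

theorem sq_inner_lt_one_of_ne_of_ne_neg {F : Type*} [NormedAddCommGroup F]
    [InnerProductSpace ℝ F] {u v : F} (hu : ‖u‖ = 1) (hv : ‖v‖ = 1) (hne : u ≠ v)
    (hne' : u ≠ -v) : ⟪u, v⟫ ^ 2 < 1 := by
  have hlt : ⟪u, v⟫ < 1 := (inner_lt_one_iff_real_of_norm_eq_one hu hv).mpr hne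
  have hgt : -⟪u, v⟫ < 1 := by
    simpa using (inner_lt_one_iff_real_of_norm_eq_one hu (by rwa [norm_neg])).mpr hne'
  nlinarith

section Branch
variable {E : Type*} [NormedAddCommGroup E] [InnerProductSpace ℝ E] {c : ℝ} {d y : E}

theorem hasGradientAt_norm [CompleteSpace E] (hy : y ≠ 0) : HasGradientAt (‖·‖) (‖y‖⁻¹ • y) y := by
  have hsq : HasFDerivAt (fun z : E => √(‖z‖ ^ 2)) _ y :=
    (hasStrictFDerivAt_norm_sq y).hasFDerivAt.sqrt (by positivity)
  simp only [Real.sqrt_sq (norm_nonneg _)] at hsq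
  rw [hasGradientAt_iff_hasFDerivAt]
  refine hsq.congr_fderiv (ContinuousLinearMap.ext fun z => ?_)
  simp only [InnerProductSpace.toDual_apply_apply, real_inner_smul_left,
    FunLike.coe_smul, Pi.smul_apply, innerSL_apply_apply, smul_eq_mul]
  ring

theorem sq_inner_lt_sq_norm (hd : ‖d‖ < 1) (hy : y ≠ 0) : ⟪d, y⟫ ^ 2 < ‖y‖ ^ 2 := by
  refine sq_lt_sq.mpr ((abs_real_inner_le_norm d y).trans_lt ?_)
  rw [abs_norm]
  exact mul_lt_of_lt_one_left (norm_pos_iff.mpr hy) hd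

noncomputable def phiBranch (c : ℝ) (d : E) (z : E) : ℝ :=
  √((‖z‖ ^ 2 - ⟪d, z⟫ ^ 2) * (1 - c ^ 2)) - ⟪d, z⟫ * c

theorem differentiableAt_phiBranch (hc : c ^ 2 < 1) (hd : ‖d‖ < 1) (hy : y ≠ 0) :
    DifferentiableAt ℝ (phiBranch c d) y := by
  have hpos : 0 < (‖y‖ ^ 2 - ⟪d, y⟫ ^ 2) * (1 - c ^ 2) :=
    mul_pos (sub_pos.mpr (sq_inner_lt_sq_norm hd hy)) (sub_pos.mpr hc)
  unfold phiBranch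
  have hinner : DifferentiableAt ℝ (fun z => ⟪d, z⟫) y := (innerSL ℝ d).differentiableAt
  exact ((((differentiableAt_id.norm_sq ℝ).sub (hinner.pow 2)).mul_const _).sqrt
    hpos.ne').sub (hinner.mul_const c)

theorem phiBranch_le_norm (hc : c ^ 2 ≤ 1) (hd : ‖d‖ ≤ 1) (z : E) : phiBranch c d z ≤ ‖z‖ := by
  have hdz : |⟪d, z⟫| ≤ ‖z‖ :=
    (abs_real_inner_le_norm d z).trans (mul_le_of_le_one_left (norm_nonneg z) hd)
  have hc' : |c| ≤ 1 := by rwa [← sq_le_one_iff_abs_le_one]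
  have hnonneg : 0 ≤ ‖z‖ + ⟪d, z⟫ * c := by
    have := abs_mul ⟪d, z⟫ c
    nlinarith [neg_abs_le (⟪d, z⟫ * c), abs_nonneg ⟪d, z⟫]
  rw [phiBranch, sub_le_iff_le_add, Real.sqrt_le_left hnonneg]
  nlinarith [sq_nonneg (c * ‖z‖ + ⟪d, z⟫)]

theorem phiBranch_eq_norm (hc : c ^ 2 ≤ 1) (hy : c * ‖y‖ + ⟪d, y⟫ = 0) :
    phiBranch c d y = ‖y‖ := by
  have ht : ⟪d, y⟫ = -(c * ‖y‖) := by linarith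
  rw [phiBranch, ht, show (‖y‖ ^ 2 - (-(c * ‖y‖)) ^ 2) * (1 - c ^ 2) = (‖y‖ * (1 - c ^ 2)) ^ 2 by
    ring, Real.sqrt_sq (by nlinarith [norm_nonneg y])]
  ring

theorem hasGradientAt_phiBranch_of_eq_zero [CompleteSpace E] (hc : c ^ 2 < 1) (hd : ‖d‖ < 1) (hy : y ≠ 0)
    (hb : c * ‖y‖ + ⟪d, y⟫ = 0) : HasGradientAt (phiBranch c d) (‖y‖⁻¹ • y) y := by
  have hdiff := (differentiableAt_phiBranch hc hd hy).hasFDerivAt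
  have hfderiv := hdiff.eq_of_eventually_le_of_eq (hasGradientAt_norm hy)
    (Eventually.of_forall (phiBranch_le_norm hc.le hd.le)) (phiBranch_eq_norm hc.le hb)
  rw [hasGradientAt_iff_hasFDerivAt, ← hfderiv]
  exact hdiff

end Branch

theorem phi_differentiable {n m : ℕ}
    (lam a : EuclideanSpace ℝ (Fin n)) (d : EuclideanSpace ℝ (Fin m))
    (hlam : ‖lam‖ = 1) (ha : ‖a‖ = 1)
    (hne : lam ≠ a) (hne' : lam ≠ -a) (hd : ‖d‖ < 1)
    (φ : EuclideanSpace ℝ (Fin m) → ℝ)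
    (hφ : ∀ y, φ y =
      if ⟪lam, a⟫ * ‖y‖ + ⟪d, y⟫ ≤ 0 then ‖y‖
      else Real.sqrt ((‖y‖ ^ 2 - ⟪d, y⟫ ^ 2) * (1 - ⟪lam, a⟫ ^ 2)) - ⟪d, y⟫ * ⟪lam, a⟫) :
    (∀ y : EuclideanSpace ℝ (Fin m), y ≠ 0 → DifferentiableAt ℝ φ y) ∧
    ∀ y : EuclideanSpace ℝ (Fin m), y ≠ 0 → ⟪lam, a⟫ * ‖y‖ + ⟪d, y⟫ = 0 →
      HasGradientAt (fun z : EuclideanSpace ℝ (Fin m) => ‖z‖) (‖y‖⁻¹ • y) y ∧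
      HasGradientAt (fun z : EuclideanSpace ℝ (Fin m) =>
          Real.sqrt ((‖z‖ ^ 2 - ⟪d, z⟫ ^ 2) * (1 - ⟪lam, a⟫ ^ 2)) - ⟪d, z⟫ * ⟪lam, a⟫)
        (‖y‖⁻¹ • y) y := by
  have hc := sq_inner_lt_one_of_ne_of_ne_neg hlam ha hne hne'
  obtain rfl : φ = fun z => if ⟪lam, a⟫ * ‖z‖ + ⟪d, z⟫ ≤ 0 then ‖z‖ else phiBranch ⟪lam, a⟫ d z :=
    funext hφ
  refine ⟨fun y hy => ?_, fun y hy hb => ⟨hasGradientAt_norm hy,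
    hasGradientAt_phiBranch_of_eq_zero hc hd hy hb⟩⟩
  refine DifferentiableAt.ite_nonpos (by fun_prop) (differentiableAt_id.norm ℝ hy)
    (differentiableAt_phiBranch hc hd hy) fun hb => ?_
  have hgrad := hasGradientAt_phiBranch_of_eq_zero hc hd hy hb
  exact ⟨(phiBranch_eq_norm hc.le hb).symm,
    (hasGradientAt_norm hy).hasFDerivAt.fderiv.trans hgrad.hasFDerivAt.fderiv.symm⟩
end

section
/- Let a, λ ∈ ℝⁿ with ‖a‖ = ‖λ‖ = 1, λ ≠ ±a, and d ∈ ℝᵐ with ‖d‖ ≤ 1. For y ∈ ℝᵐ, the Lagrangian dual of max{λᵀx : ‖x‖ ≤ ‖y‖, aᵀx + dᵀy ≤ 0} is inf{‖λ − θa‖‖y‖ − θdᵀy : θ ≥ 0}, and strong duality holds: both problems have common optimal value equal to ‖y‖ if λᵀa‖y‖ + dᵀy ≤ 0, and sqrt((‖y‖² − (dᵀy)²)(1 − (λᵀa)²)) − (dᵀy)(λᵀa) otherwise. -/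
open RealInnerProductSpace

/-- squares equal implies equal for nonnegative reals -/
lemma phi_eq_of_sq_eq {x y : ℝ} (hx : 0 ≤ x) (hy : 0 ≤ y) (h : x ^ 2 = y ^ 2) : x = y := by
  rw [← Real.sqrt_sq hx, h, Real.sqrt_sq hy]

lemma phi_le_of_sq_le {x y : ℝ} (hx : 0 ≤ x) (hy : 0 ≤ y) (h : x ^ 2 ≤ y ^ 2) : x ≤ y := by
  calc x = Real.sqrt (x ^ 2) := (Real.sqrt_sq hx).symm
    _ ≤ Real.sqrt (y ^ 2) := Real.sqrt_le_sqrt h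
    _ = y := Real.sqrt_sq hy

lemma phi_ctsq_nonneg (c s R t q : ℝ) (hRpos : 0 < R) (hcase : 0 < c * R + s)
    (hs2 : s ^ 2 ≤ R ^ 2) (ht2 : t ^ 2 = R ^ 2 - s ^ 2) (ht0 : 0 ≤ t)
    (hq2 : q ^ 2 = 1 - c ^ 2) (hqpos : 0 < q) : 0 ≤ c * t + s * q := by
  have hkey : c ^ 2 * t ^ 2 - s ^ 2 * q ^ 2 = (c * R + s) * (c * R - s) := by
    rw [ht2, hq2]; ring
  rcases le_or_gt s 0 with hs | hs
  · have hc0 : 0 < c := by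
      by_contra hc
      push_neg at hc
      have h1 : c * R ≤ 0 := mul_nonpos_iff.mpr (Or.inr ⟨hc, hRpos.le⟩)
      linarith
    by_contra h
    push_neg at h
    have hge : 0 ≤ c * t - s * q := by
      nlinarith [mul_nonneg hc0.le ht0, mul_nonneg (neg_nonneg.mpr hs) hqpos.le]
    have hcRs : 0 < c * R - s := by nlinarith [mul_pos hc0 hRpos]
    nlinarith [mul_nonpos_of_nonpos_of_nonneg h.le hge, mul_pos hcase hcRs]
  · rcases le_or_gt 0 c with hc | hc
    · have h1 := mul_nonneg hc ht0
      nlinarith [mul_pos hs hqpos]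
    · by_contra h
      push_neg at h
      have hge : c * t - s * q ≤ 0 := by
        nlinarith [mul_pos hs hqpos, mul_nonpos_of_nonpos_of_nonneg hc.le ht0]
      have hscR : 0 < s - c * R := by
        nlinarith [mul_pos (neg_pos.mpr hc) hRpos]
      nlinarith [mul_nonneg (neg_nonneg.mpr h.le) (neg_nonneg.mpr hge),
        mul_pos hcase hscR]

/-- Weak duality for the primal/dual pair. -/
lemma phi_weak_dual {n : ℕ} (a lam x : EuclideanSpace ℝ (Fin n)) (R s θ : ℝ)
    (hx : ‖x‖ ≤ R) (hfeas : ⟪a, x⟫ + s ≤ 0) (hθ : 0 ≤ θ) :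
    ⟪lam, x⟫ ≤ ‖lam - θ • a‖ * R - θ * s := by
  have h1 : ⟪lam - θ • a, x⟫ ≤ ‖lam - θ • a‖ * ‖x‖ := real_inner_le_norm _ _
  have h2 : ⟪lam - θ • a, x⟫ = ⟪lam, x⟫ - θ * ⟪a, x⟫ := by
    rw [inner_sub_left, real_inner_smul_left]
  have h3 : ‖lam - θ • a‖ * ‖x‖ ≤ ‖lam - θ • a‖ * R :=
    mul_le_mul_of_nonneg_left hx (norm_nonneg _)
  nlinarith [mul_le_mul_of_nonneg_left hfeas hθ]

set_option maxHeartbeats 1000000 in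
theorem phi_strong_duality {n m : ℕ}
    (a lam : EuclideanSpace ℝ (Fin n)) (d : EuclideanSpace ℝ (Fin m))
    (ha : ‖a‖ = 1) (hlam : ‖lam‖ = 1)
    (hne : lam ≠ a) (hne' : lam ≠ -a) (hd : ‖d‖ ≤ 1)
    (y : EuclideanSpace ℝ (Fin m)) :
    IsGreatest {r : ℝ | ∃ x : EuclideanSpace ℝ (Fin n),
        ‖x‖ ≤ ‖y‖ ∧ ⟪a, x⟫ + ⟪d, y⟫ ≤ 0 ∧ r = ⟪lam, x⟫}
      (if ⟪lam, a⟫ * ‖y‖ + ⟪d, y⟫ ≤ 0 then ‖y‖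
       else Real.sqrt ((‖y‖ ^ 2 - ⟪d, y⟫ ^ 2) * (1 - ⟪lam, a⟫ ^ 2)) - ⟪d, y⟫ * ⟪lam, a⟫) ∧
    IsGLB {r : ℝ | ∃ θ : ℝ, 0 ≤ θ ∧ r = ‖lam - θ • a‖ * ‖y‖ - θ * ⟪d, y⟫}
      (if ⟪lam, a⟫ * ‖y‖ + ⟪d, y⟫ ≤ 0 then ‖y‖
       else Real.sqrt ((‖y‖ ^ 2 - ⟪d, y⟫ ^ 2) * (1 - ⟪lam, a⟫ ^ 2)) - ⟪d, y⟫ * ⟪lam, a⟫) := by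
  set c : ℝ := ⟪lam, a⟫ with hcdef
  set s : ℝ := ⟪d, y⟫ with hsdef
  set R : ℝ := ‖y‖ with hRdef
  have hR : 0 ≤ R := norm_nonneg y
  have hsR : |s| ≤ R := by
    have h1 : |s| ≤ ‖d‖ * ‖y‖ := abs_real_inner_le_norm d y
    exact h1.trans (mul_le_of_le_one_left (norm_nonneg y) hd)
  have hclt : c < 1 := (inner_lt_one_iff_real_of_norm_eq_one hlam ha).mpr hne
  have hcgt : -1 < c := by
    have h1 : ⟪lam, -a⟫ < 1 :=
      (inner_lt_one_iff_real_of_norm_eq_one hlam (by simp [ha])).mpr hne'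
    rw [inner_neg_right] at h1
    have h2 : -⟪lam, a⟫ < 1 := h1
    rw [← hcdef] at h2
    linarith
  have haa : ⟪a, a⟫ = (1 : ℝ) := by
    rw [real_inner_self_eq_norm_sq, ha]; norm_num
  have hll : ⟪lam, lam⟫ = (1 : ℝ) := by
    rw [real_inner_self_eq_norm_sq, hlam]; norm_num
  have hal : ⟪a, lam⟫ = c := by rw [real_inner_comm]
  -- the norm formula
  have hnorm : ∀ θ : ℝ, ‖lam - θ • a‖ ^ 2 = θ ^ 2 - 2 * θ * c + 1 := by
    intro θ
    rw [norm_sub_sq_real, real_inner_smul_right, norm_smul, hlam, ha, ← hcdef,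
      Real.norm_eq_abs, mul_one, sq_abs]
    ring
  clear_value c s R
  have h1c : 0 < 1 - c ^ 2 := by
    calc (0:ℝ) < (1 - c) * (1 + c) :=
          mul_pos (by linarith) (by linarith)
      _ = 1 - c ^ 2 := by ring
  set q : ℝ := Real.sqrt (1 - c ^ 2) with hqdef
  have hq2 : q ^ 2 = 1 - c ^ 2 := Real.sq_sqrt h1c.le
  have hqpos : 0 < q := Real.sqrt_pos.mpr h1c
  have hq0 : q ≠ 0 := hqpos.ne'
  clear_value q
  by_cases hcase : c * R + s ≤ 0
  · rw [if_pos hcase]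
    have hmem : R ∈ {r : ℝ | ∃ x : EuclideanSpace ℝ (Fin n),
        ‖x‖ ≤ R ∧ ⟪a, x⟫ + s ≤ 0 ∧ r = ⟪lam, x⟫} := by
      refine ⟨R • lam, ?_, ?_, ?_⟩
      · rw [norm_smul, hlam]; simp [abs_of_nonneg hR]
      · rw [real_inner_smul_right, hal]; linarith
      · rw [real_inner_smul_right, hll]; ring
    constructor
    · refine ⟨hmem, ?_⟩
      rintro r ⟨x, hx1, hx2, rfl⟩
      calc ⟪lam, x⟫ ≤ ‖lam‖ * ‖x‖ := real_inner_le_norm _ _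
        _ ≤ R := by rw [hlam]; simpa using hx1
    · constructor
      · rintro r ⟨θ, hθ, rfl⟩
        obtain ⟨x, hx1, hx2, hx3⟩ := hmem
        calc R = ⟪lam, x⟫ := hx3
          _ ≤ ‖lam - θ • a‖ * R - θ * s := phi_weak_dual a lam x R s θ hx1 hx2 hθ
      · intro b hb
        exact hb ⟨0, le_refl 0, by simp [hlam]⟩
  · rw [if_neg hcase]
    push_neg at hcase
    have hRpos : 0 < R := by
      rcases hR.lt_or_eq with h | h
      · exact h
      · exfalso
        have hs0 : s = 0 := by
          have h1 := hsR; rw [← h] at h1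
          exact abs_eq_zero.mp (le_antisymm h1 (abs_nonneg s))
        rw [← h, hs0] at hcase; simp at hcase
    have hs2 : s ^ 2 ≤ R ^ 2 := by
      calc s ^ 2 = |s| * |s| := by rw [abs_mul_abs_self]; ring
        _ ≤ R * R := mul_self_le_mul_self (abs_nonneg s) hsR
        _ = R ^ 2 := (sq R).symm
    set t : ℝ := Real.sqrt (R ^ 2 - s ^ 2) with htdef
    have ht2 : t ^ 2 = R ^ 2 - s ^ 2 := Real.sq_sqrt (by linarith)
    have ht0 : 0 ≤ t := Real.sqrt_nonneg _
    have hV : Real.sqrt ((R ^ 2 - s ^ 2) * (1 - c ^ 2)) = t * q := by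
      rw [Real.sqrt_mul (by linarith), ← htdef, ← hqdef]
    clear_value t
    rw [hV]
    -- the primal optimal point
    have hab : ⟪a, lam - c • a⟫ = (0 : ℝ) := by
      rw [inner_sub_right, real_inner_smul_right, hal, haa]; ring
    have hba : ⟪lam - c • a, a⟫ = (0 : ℝ) := by rw [real_inner_comm]; exact hab
    have hlb : ⟪lam, lam - c • a⟫ = q ^ 2 := by
      rw [inner_sub_right, real_inner_smul_right, hll, ← hcdef, hq2]; ring
    have hbl : ⟪lam - c • a, lam⟫ = q ^ 2 := by rw [real_inner_comm]; exact hlb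
    have hbb : ⟪lam - c • a, lam - c • a⟫ = q ^ 2 := by
      rw [inner_sub_right, hbl, real_inner_smul_right, hba]; ring
    have haxs : ⟪a, (-s) • a + (t / q) • (lam - c • a)⟫ = -s := by
      rw [inner_add_right, real_inner_smul_right, real_inner_smul_right, haa, hab]; ring
    have hlxs : ⟪lam, (-s) • a + (t / q) • (lam - c • a)⟫ = t * q - s * c := by
      rw [inner_add_right, real_inner_smul_right, real_inner_smul_right, hlb, ← hcdef]
      field_simp; ring
    have hbxs : ⟪lam - c • a, (-s) • a + (t / q) • (lam - c • a)⟫ = (t / q) * q ^ 2 := by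
      rw [inner_add_right, real_inner_smul_right, real_inner_smul_right, hba, hbb]; ring
    have hxx : ⟪(-s) • a + (t / q) • (lam - c • a),
        (-s) • a + (t / q) • (lam - c • a)⟫ = R ^ 2 := by
      rw [inner_add_left, real_inner_smul_left, real_inner_smul_left, haxs, hbxs]
      field_simp
      linear_combination ht2
    have hnxs : ‖(-s) • a + (t / q) • (lam - c • a)‖ = R := by
      apply phi_eq_of_sq_eq (norm_nonneg _) hR
      rw [← real_inner_self_eq_norm_sq, hxx]
    -- approximate dual optimality
    have hdualeps : ∀ ε : ℝ, 0 < ε → ∃ θ : ℝ, 0 ≤ θ ∧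
        ‖lam - θ • a‖ * R - θ * s ≤ t * q - s * c + ε := by
      intro ε hε
      by_cases htpos : 0 < t
      · -- exact dual optimum θ' = c + s*q/t
        have ht0' : t ≠ 0 := htpos.ne'
        have hctsq : 0 ≤ c * t + s * q :=
          phi_ctsq_nonneg c s R t q hRpos hcase hs2 ht2 ht0 hq2 hqpos
        have hθnn : 0 ≤ c + s * q / t := by
          have h1 : c + s * q / t = (c * t + s * q) / t := by field_simp
          rw [h1]; exact div_nonneg hctsq ht0
        have hn2 : ‖lam - (c + s * q / t) • a‖ ^ 2 = (q * R / t) ^ 2 := by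
          rw [hnorm]
          linear_combination (norm := (field_simp; ring1)) (q ^ 2 / t ^ 2) * ht2 - hq2
        have hnrm : ‖lam - (c + s * q / t) • a‖ = q * R / t :=
          phi_eq_of_sq_eq (norm_nonneg _) (by positivity) hn2
        refine ⟨c + s * q / t, hθnn, ?_⟩
        rw [hnrm]
        have hval : q * R / t * R - (c + s * q / t) * s = t * q - s * c := by
          linear_combination (norm := (field_simp; ring1)) (-(q / t)) * ht2
        rw [hval]; linarith
      · -- t = 0 : take θ large
        have ht00 : t = 0 := le_antisymm (not_lt.mp htpos) ht0
        have hsRR : s = R := by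
          rw [ht00] at ht2
          have h1 : (s - R) * (s + R) = 0 := by linear_combination ht2
          rcases mul_eq_zero.mp h1 with h | h
          · linarith
          · exfalso
            have h2 : 0 < R * (1 - c) := mul_pos hRpos (by linarith)
            have h3 : R * (1 - c) = R - c * R := by ring
            linarith
        set u : ℝ := max 1 (R * q ^ 2 / (2 * ε)) with hudef
        have hu1 : 1 ≤ u := le_max_left _ _
        have hu2 : R * q ^ 2 / (2 * ε) ≤ u := le_max_right _ _
        have hupos : 0 < u := by linarith
        refine ⟨c + u, by linarith, ?_⟩
        have hn2 : ‖lam - (c + u) • a‖ ^ 2 = u ^ 2 + q ^ 2 := by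
          rw [hnorm, hq2]; ring
        have hble : ‖lam - (c + u) • a‖ ≤ u + q ^ 2 / (2 * u) := by
          apply phi_le_of_sq_le (norm_nonneg _) (by positivity)
          rw [hn2]
          have hexp : (u + q ^ 2 / (2 * u)) ^ 2 = u ^ 2 + q ^ 2 + (q ^ 2 / (2 * u)) ^ 2 := by
            field_simp; ring
          rw [hexp]
          linarith [sq_nonneg (q ^ 2 / (2 * u))]
        have hεu : R * q ^ 2 / (2 * u) ≤ ε := by
          rw [div_le_iff₀ (by linarith : (0:ℝ) < 2 * u)]
          have h3 := (div_le_iff₀ (by linarith : (0:ℝ) < 2 * ε)).mp hu2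
          linarith
        calc ‖lam - (c + u) • a‖ * R - (c + u) * s
            ≤ (u + q ^ 2 / (2 * u)) * R - (c + u) * s := by
              linarith [mul_le_mul_of_nonneg_right hble hR]
          _ = t * q - s * c + R * q ^ 2 / (2 * u) := by
              rw [ht00, hsRR]; field_simp; ring
          _ ≤ t * q - s * c + ε := by linarith
    have hub : ∀ r ∈ {r : ℝ | ∃ x : EuclideanSpace ℝ (Fin n),
        ‖x‖ ≤ R ∧ ⟪a, x⟫ + s ≤ 0 ∧ r = ⟪lam, x⟫}, r ≤ t * q - s * c := by
      rintro r ⟨x, hx1, hx2, rfl⟩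
      refine le_of_forall_pos_le_add ?_
      intro ε hε
      obtain ⟨θ, hθ0, hθval⟩ := hdualeps ε hε
      calc ⟪lam, x⟫ ≤ ‖lam - θ • a‖ * R - θ * s := phi_weak_dual a lam x R s θ hx1 hx2 hθ0
        _ ≤ t * q - s * c + ε := hθval
    refine ⟨⟨⟨(-s) • a + (t / q) • (lam - c • a), le_of_eq hnxs,
        by rw [haxs]; linarith, hlxs.symm⟩, hub⟩, ?_, ?_⟩
    · rintro r ⟨θ, hθ, rfl⟩
      calc t * q - s * c = ⟪lam, (-s) • a + (t / q) • (lam - c • a)⟫ := hlxs.symm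
        _ ≤ ‖lam - θ • a‖ * R - θ * s :=
          phi_weak_dual a lam _ R s θ (le_of_eq hnxs) (by rw [haxs]; linarith) hθ
    · intro bb hbb'
      refine le_of_forall_pos_le_add ?_
      intro ε hε
      obtain ⟨θ, hθ0, hθval⟩ := hdualeps ε hε
      calc bb ≤ ‖lam - θ • a‖ * R - θ * s := hbb' ⟨θ, hθ0, rfl⟩
        _ ≤ t * q - s * c + ε := hθval
end

section
/- Let a, λ ∈ ℝⁿ with ‖a‖ = ‖λ‖ = 1, λ ≠ ±a, and d ∈ ℝᵐ with ‖d‖ ≤ 1. If y ∈ ℝᵐ satisfies λᵀa‖y‖ + dᵀy > 0, then the point x(y) = S(y)λ − (dᵀy + λᵀa·S(y))a, where S(y) = sqrt((‖y‖² − (dᵀy)²)/(1 − (λᵀa)²)), satisfies ‖x(y)‖ = ‖y‖, aᵀx(y) = −dᵀy, and λᵀx(y) = sqrt((‖y‖² − (dᵀy)²)(1 − (λᵀa)²)) − (dᵀy)(λᵀa). -/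
/-!
Only the Gram matrix of the unit vectors `a`, `λ` enters: with `c = ⟪λ, a⟫` and `t = ⟪d, y⟫`, the
vector `x = S • λ - (t + c S) • a` has `⟪a, x⟫ = -t`, `⟪λ, x⟫ = S (1 - c²) - t c` and
`‖x‖² = S² (1 - c²) + t²`. As `λ ≠ ±a` gives `c² < 1` and `‖d‖ ≤ 1` gives `t² ≤ ‖y‖²`, the square
root defining `S` is exact: `S² (1 - c²) = ‖y‖² - t²` and `S (1 - c²) = √((‖y‖² - t²)(1 - c²))`.
-/

open RealInnerProductSpace

section InnerProduct

variable {F : Type*} [NormedAddCommGroup F] [InnerProductSpace ℝ F]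

theorem real_inner_sq_lt_one_of_norm_eq_one {u v : F} (hu : ‖u‖ = 1) (hv : ‖v‖ = 1)
    (hne : u ≠ v) (hne' : u ≠ -v) : ⟪u, v⟫ ^ 2 < 1 := by
  have hlt : ⟪u, v⟫ < 1 := (inner_lt_one_iff_real_of_norm_eq_one hu hv).2 hne
  have hgt : -1 < ⟪u, v⟫ :=
    (neg_one_le_real_inner_of_norm_eq_one hu hv).lt_of_ne
      fun h => hne' ((inner_eq_neg_one_iff_of_norm_eq_one hu hv).1 h.symm)
  rw [sq_lt_one_iff_abs_lt_one, abs_lt]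
  exact ⟨hgt, hlt⟩

theorem real_inner_sq_le_norm_sq_of_norm_le_one {d y : F} (hd : ‖d‖ ≤ 1) :
    ⟪d, y⟫ ^ 2 ≤ ‖y‖ ^ 2 := by
  rw [← sq_abs]
  have : |⟪d, y⟫| ≤ ‖y‖ :=
    (abs_real_inner_le_norm d y).trans (mul_le_of_le_one_left (norm_nonneg y) hd)
  gcongr

variable {a l : F} (s t : ℝ)

theorem inner_unit_smul_sub_smul_unit_left (ha : ‖a‖ = 1) :
    ⟪a, s • l - (t + ⟪l, a⟫ * s) • a⟫ = -t := by
  rw [inner_sub_right, inner_smul_right, inner_smul_right, real_inner_comm,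
    inner_self_eq_one_of_norm_eq_one ha]
  ring

theorem inner_unit_smul_sub_smul_unit_right (hl : ‖l‖ = 1) :
    ⟪l, s • l - (t + ⟪l, a⟫ * s) • a⟫ = s * (1 - ⟪l, a⟫ ^ 2) - t * ⟪l, a⟫ := by
  rw [inner_sub_right, inner_smul_right, inner_smul_right, inner_self_eq_one_of_norm_eq_one hl]
  ring

theorem norm_unit_smul_sub_smul_unit_sq (ha : ‖a‖ = 1) (hl : ‖l‖ = 1) :
    ‖s • l - (t + ⟪l, a⟫ * s) • a‖ ^ 2 = s ^ 2 * (1 - ⟪l, a⟫ ^ 2) + t ^ 2 := by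
  rw [← real_inner_self_eq_norm_sq, inner_sub_left, real_inner_smul_left, real_inner_smul_left,
    inner_unit_smul_sub_smul_unit_right s t hl, inner_unit_smul_sub_smul_unit_left s t ha]
  ring

end InnerProduct

theorem Real.sqrt_mul_eq_sqrt_div_mul {q p : ℝ} (hp : 0 < p) :
    √(q * p) = √(q / p) * p := by
  rw [← Real.sqrt_sq hp.le, ← Real.sqrt_mul' _ (sq_nonneg p), Real.sqrt_sq hp.le]
  congr 1
  field_simp

theorem primal_solution_properties_general {n m : ℕ}
    (a lam : EuclideanSpace ℝ (Fin n)) (d : EuclideanSpace ℝ (Fin m))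
    (ha : ‖a‖ = 1) (hlam : ‖lam‖ = 1)
    (hne : lam ≠ a) (hne' : lam ≠ -a) (hd : ‖d‖ ≤ 1)
    (y : EuclideanSpace ℝ (Fin m))
    (Sy : ℝ) (hSy : Sy = Real.sqrt ((‖y‖ ^ 2 - ⟪d, y⟫ ^ 2) / (1 - ⟪lam, a⟫ ^ 2)))
    (x : EuclideanSpace ℝ (Fin n))
    (hx : x = Sy • lam - (⟪d, y⟫ + ⟪lam, a⟫ * Sy) • a) :
    ‖x‖ = ‖y‖ ∧ ⟪a, x⟫ = -⟪d, y⟫ ∧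
    ⟪lam, x⟫ = Real.sqrt ((‖y‖ ^ 2 - ⟪d, y⟫ ^ 2) * (1 - ⟪lam, a⟫ ^ 2)) - ⟪d, y⟫ * ⟪lam, a⟫ := by
  have hc : 0 < 1 - ⟪lam, a⟫ ^ 2 :=
    sub_pos.2 (real_inner_sq_lt_one_of_norm_eq_one hlam ha hne hne')
  have ht : 0 ≤ ‖y‖ ^ 2 - ⟪d, y⟫ ^ 2 := sub_nonneg.2 (real_inner_sq_le_norm_sq_of_norm_le_one hd)
  have hS : Sy ^ 2 * (1 - ⟪lam, a⟫ ^ 2) = ‖y‖ ^ 2 - ⟪d, y⟫ ^ 2 := by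
    rw [hSy, Real.sq_sqrt (div_nonneg ht hc.le), div_mul_cancel₀ _ hc.ne']
  subst hx
  refine ⟨?_, inner_unit_smul_sub_smul_unit_left _ _ ha, ?_⟩
  · rw [← sq_eq_sq₀ (norm_nonneg _) (norm_nonneg _), norm_unit_smul_sub_smul_unit_sq _ _ ha hlam, hS]
    ring
  · rw [inner_unit_smul_sub_smul_unit_right _ _ hlam, Real.sqrt_mul_eq_sqrt_div_mul hc, ← hSy]

theorem primal_solution_properties {n m : ℕ}
    (a lam : EuclideanSpace ℝ (Fin n)) (d : EuclideanSpace ℝ (Fin m))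
    (ha : ‖a‖ = 1) (hlam : ‖lam‖ = 1)
    (hne : lam ≠ a) (hne' : lam ≠ -a) (hd : ‖d‖ ≤ 1)
    (y : EuclideanSpace ℝ (Fin m))
    (hy : 0 < ⟪lam, a⟫ * ‖y‖ + ⟪d, y⟫)
    (Sy : ℝ) (hSy : Sy = Real.sqrt ((‖y‖ ^ 2 - ⟪d, y⟫ ^ 2) / (1 - ⟪lam, a⟫ ^ 2)))
    (x : EuclideanSpace ℝ (Fin n))
    (hx : x = Sy • lam - (⟪d, y⟫ + ⟪lam, a⟫ * Sy) • a) :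
    ‖x‖ = ‖y‖ ∧ ⟪a, x⟫ = -⟪d, y⟫ ∧
    ⟪lam, x⟫ = Real.sqrt ((‖y‖ ^ 2 - ⟪d, y⟫ ^ 2) * (1 - ⟪lam, a⟫ ^ 2)) - ⟪d, y⟫ * ⟪lam, a⟫ :=
  primal_solution_properties_general a lam d ha hlam hne hne' hd y Sy hSy x hx
end

section
/- Let a = (−3,4)ᵀ ∈ ℝ², d = 5 ∈ ℝ, S = {(x,y) ∈ ℝ²×ℝ : ‖x‖ ≤ |y|, aᵀx + dy ≤ 0}, λ = (−4,−3)ᵀ/5, and C = {(x,y) : βy ≤ λᵀx for all β with |β| = 1 and aᵀλ + dβ ≤ 0}. Then C is not S-free: the point (3, −4, 5) belongs to S and to the interior of C. -/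
/-! Since `⟪a, λ⟫ = 0 > -5`, the constraint `⟪a, λ⟫ + 5β ≤ 0` leaves only `β = -1`, so `C` contains
the closed half-space `-y ≤ ⟪λ, x⟫`. Its open part `-y < ⟪λ, x⟫` lies in `int C`, and it contains
`(3, -4, 5)` because `⟪λ, (3, -4)⟫ = 0 > -5`. -/

open RealInnerProductSpace

section HalfspaceCut

variable {E : Type*} [NormedAddCommGroup E] [InnerProductSpace ℝ E]

lemma setOf_neg_snd_le_inner_subset_cut {c d : ℝ} (hcd : -d < c) (lam : E) :
    {q : E × ℝ | -q.2 ≤ ⟪lam, q.1⟫} ⊆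
      {q | ∀ β : ℝ, |β| = 1 → c + d * β ≤ 0 → β * q.2 ≤ ⟪lam, q.1⟫} := by
  intro q hq β hβ hcβ
  rcases abs_eq zero_le_one |>.mp hβ with rfl | rfl
  · linarith
  · simpa using hq

lemma mem_interior_of_neg_snd_lt_inner {lam : E} {s : Set (E × ℝ)}
    (hs : {q : E × ℝ | -q.2 ≤ ⟪lam, q.1⟫} ⊆ s) {q : E × ℝ} (hq : -q.2 < ⟪lam, q.1⟫) :
    q ∈ interior s :=
  interior_maximal (fun _ h => hs (le_of_lt h))
    (isOpen_lt continuous_snd.neg (continuous_const.inner continuous_fst)) hq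

end HalfspaceCut

lemma EuclideanSpace.inner_vecCons_two (x₁ x₂ y₁ y₂ : ℝ) :
    ⟪(WithLp.equiv 2 (Fin 2 → ℝ)).symm ![x₁, x₂], (WithLp.equiv 2 (Fin 2 → ℝ)).symm ![y₁, y₂]⟫ =
      x₁ * y₁ + x₂ * y₂ := by
  simp [PiLp.inner_apply, Fin.sum_univ_two, mul_comm]

lemma EuclideanSpace.norm_vecCons_two (x₁ x₂ : ℝ) :
    ‖(WithLp.equiv 2 (Fin 2 → ℝ)).symm ![x₁, x₂]‖ = √(x₁ ^ 2 + x₂ ^ 2) := by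
  simp [EuclideanSpace.norm_eq, Fin.sum_univ_two]

theorem counterexample_not_free
    (a : EuclideanSpace ℝ (Fin 2))
    (ha : a = (WithLp.equiv 2 (Fin 2 → ℝ)).symm ![(-3 : ℝ), 4])
    (lam : EuclideanSpace ℝ (Fin 2))
    (hlam : lam = (WithLp.equiv 2 (Fin 2 → ℝ)).symm ![(-4 / 5 : ℝ), -3 / 5])
    (S C : Set (EuclideanSpace ℝ (Fin 2) × ℝ))
    (hS : S = {q | ‖q.1‖ ≤ |q.2| ∧ ⟪a, q.1⟫ + 5 * q.2 ≤ 0})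
    (hC : C = {q | ∀ β : ℝ, |β| = 1 → ⟪a, lam⟫ + 5 * β ≤ 0 → β * q.2 ≤ ⟪lam, q.1⟫}) :
    ((WithLp.equiv 2 (Fin 2 → ℝ)).symm ![(3 : ℝ), -4], (5 : ℝ)) ∈ S ∧
    ((WithLp.equiv 2 (Fin 2 → ℝ)).symm ![(3 : ℝ), -4], (5 : ℝ)) ∈ interior C := by
  subst ha hlam hS hC
  have ha_perp_lam : ⟪(WithLp.equiv 2 (Fin 2 → ℝ)).symm ![(-3 : ℝ), 4],
      (WithLp.equiv 2 (Fin 2 → ℝ)).symm ![(-4 / 5 : ℝ), -3 / 5]⟫ = 0 := by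
    rw [EuclideanSpace.inner_vecCons_two]; norm_num
  refine ⟨⟨?_, ?_⟩, ?_⟩
  · rw [EuclideanSpace.norm_vecCons_two, show (3 : ℝ) ^ 2 + (-4) ^ 2 = 5 ^ 2 by norm_num,
      Real.sqrt_sq (by norm_num)]
    norm_num
  · rw [EuclideanSpace.inner_vecCons_two]; norm_num
  · refine mem_interior_of_neg_snd_lt_inner
      (setOf_neg_snd_le_inner_subset_cut (by rw [ha_perp_lam]; norm_num) _) ?_
    rw [EuclideanSpace.inner_vecCons_two]; norm_num
end

section
/- Let a ∈ ℝⁿ, d ∈ ℝ with |d| ≥ ‖a‖ and d ≠ 0. Then the set S = {(x,y) ∈ ℝⁿ×ℝ : ‖x‖² ≤ y², aᵀx + dy ≤ 0} is convex; specifically, S equals the second-order cone {(x,y) : ‖x‖ ≤ −sign(d)·y}. -/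
/-!
Write `s = sign d`, so that `d * y = |d| * (s * y)`. On `‖x‖ ≤ |y|` the linear constraint forces
`s * y ≤ 0`: otherwise Cauchy–Schwarz gives `⟪a, x⟫ + d * y ≥ (|d| - ‖a‖) * (s * y) > 0`. Hence `S`
is the cone `‖x‖ ≤ -(s * y)`, which is the preimage of the epigraph of the norm under a linear map.
-/

open RealInnerProductSpace

theorem convex_setOf_norm_le_mul {E : Type*} [NormedAddCommGroup E] [NormedSpace ℝ E] (c : ℝ) :
    Convex ℝ {p : E × ℝ | ‖p.1‖ ≤ c * p.2} := by
  have hepi : Convex ℝ {q : E × ℝ | q.1 ∈ Set.univ ∧ ‖q.1‖ ≤ q.2} :=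
    convexOn_norm convex_univ |>.convex_epigraph
  simpa using hepi.linear_preimage ((LinearMap.id : E →ₗ[ℝ] E).prodMap (LinearMap.mulLeft ℝ c))

theorem norm_le_abs_and_inner_add_mul_nonpos_iff {E : Type*} [NormedAddCommGroup E]
    [InnerProductSpace ℝ E] {a x : E} {c t : ℝ} (hac : ‖a‖ < c) :
    ‖x‖ ≤ |t| ∧ ⟪a, x⟫ + c * t ≤ 0 ↔ ‖x‖ ≤ -t := by
  have hlow : -(‖a‖ * ‖x‖) ≤ ⟪a, x⟫ := neg_le_of_abs_le (abs_real_inner_le_norm a x)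
  have hup : ⟪a, x⟫ ≤ ‖a‖ * ‖x‖ := real_inner_le_norm a x
  have ha := norm_nonneg a
  have hx := norm_nonneg x
  constructor
  · rintro ⟨hxt, hlin⟩
    have ht : t ≤ 0 := by
      by_contra! ht
      rw [abs_of_pos ht] at hxt
      nlinarith [mul_le_mul_of_nonneg_left hxt ha]
    rwa [abs_of_nonpos ht] at hxt
  · intro hxt
    have ht : t ≤ 0 := by linarith
    refine ⟨by rwa [abs_of_nonpos ht], ?_⟩
    nlinarith [mul_le_mul_of_nonneg_left hxt ha]

theorem convex_case_second_order_cone {n : ℕ}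
    (a : EuclideanSpace ℝ (Fin n)) (d : ℝ)
    (had : ‖a‖ < |d|)
    (S : Set (EuclideanSpace ℝ (Fin n) × ℝ))
    (hS : S = {p | ‖p.1‖ ^ 2 ≤ p.2 ^ 2 ∧ ⟪a, p.1⟫ + d * p.2 ≤ 0}) :
    Convex ℝ S ∧
    S = {p : EuclideanSpace ℝ (Fin n) × ℝ |
      ‖p.1‖ ≤ -(if 0 < d then (1 : ℝ) else -1) * p.2} := by
  set s : ℝ := if 0 < d then 1 else -1
  have hd : d ≠ 0 := abs_pos.mp ((norm_nonneg a).trans_lt had)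
  have hs_abs : |s| = 1 := by unfold s; split_ifs <;> simp
  have hd_eq : d = |d| * s := by
    unfold s; split_ifs with h
    · simp [abs_of_pos h]
    · simp [abs_of_neg (lt_of_le_of_ne (not_lt.mp h) hd)]
  have hcone : S = {p | ‖p.1‖ ≤ -s * p.2} := by
    ext ⟨x, y⟩
    have hy : |y| = |s * y| := by rw [abs_mul, hs_abs, one_mul]
    have hdy : d * y = |d| * (s * y) := by rw [hd_eq, mul_assoc, ← hd_eq]
    simp only [hS, Set.mem_ofPred_eq, sq_le_sq, abs_norm, hy, hdy, neg_mul]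
    exact norm_le_abs_and_inner_add_mul_nonpos_iff had
  exact ⟨hcone ▸ convex_setOf_norm_le_mul (-s), hcone⟩
end

section
/- Let a, λ ∈ ℝⁿ with ‖a‖ = ‖λ‖ = 1, λ ≠ ±a, d ∈ ℝᵐ with ‖d‖ < 1, and let φ_λ(y) = max{λᵀx : ‖x‖ ≤ ‖y‖, aᵀx + dᵀy ≤ 0}. Define r(β) = 0 if λᵀa + dᵀβ ≤ 0 and r(β) = (dᵀβ + λᵀa·φ_λ(β))/(φ_λ(β) + dᵀβ·λᵀa) otherwise, for β on the unit sphere of ℝᵐ. Then the set C = {(x,y) : −λᵀx + ∇φ_λ(β)ᵀy ≤ r(β) for all β with ‖β‖ = 1} has empty interior intersection with S = {(x,y) : ‖x‖ ≤ ‖y‖, aᵀx + dᵀy = −1}, i.e., for every (x₀,y₀) ∈ S with y₀ ≠ 0, −λᵀx₀ + φ_λ(y₀) ≥ r(y₀/‖y₀‖). -/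
/-!
Write `λ = t • a + u • e` with `e` a unit vector orthogonal to `a` and `u > 0`. For a unit
vector `β` put `s = ⟪d, β⟫`, `v = √(1 - s²)` and `w = -s • a + v • e`, again a unit vector.
Everything follows from the identity `v • λ = u • w + (s u + t v) • a` and Cauchy–Schwarz
`⟪w, x⟫ ≤ ‖x‖`. If `t + s > 0` then `s u + t v ≥ 0`, so `w` attains `φ_λ(β) = u v - s t` and
`r(β) = (s u + t v) / v`; at `x₀`, where `⟪a, x₀⟫ = -1 - ‖y₀‖ s`, the identity gives
`s u + t v ≤ v (-⟪λ, x₀⟫ + ‖y₀‖ φ_λ(β))`, and `‖y₀‖ φ_λ(β) ≤ φ_λ(y₀)` since `‖y₀‖ • w` is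
feasible for `y₀`. If `t + s ≤ 0` then `r(β) = 0` and `x₀` itself is feasible for `y₀`.
-/

open RealInnerProductSpace

theorem exists_pos_sq_add_sq_eq_one {s : ℝ} (hs : |s| < 1) :
    ∃ v : ℝ, 0 < v ∧ s ^ 2 + v ^ 2 = 1 := by
  have hs2 : s ^ 2 < 1 := (sq_lt_one_iff_abs_lt_one s).2 hs
  refine ⟨√(1 - s ^ 2), Real.sqrt_pos.2 (by linarith), ?_⟩
  rw [Real.sq_sqrt (by linarith)]
  ring

/-- With `t = cos α`, `u = sin α`, `s = cos γ`, `v = sin γ` this says `sin (α + γ) ≥ 0`. -/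
theorem mul_add_mul_nonneg_of_add_pos {s t u v : ℝ} (htu : t ^ 2 + u ^ 2 = 1)
    (hsv : s ^ 2 + v ^ 2 = 1) (hu : 0 ≤ u) (hv : 0 ≤ v) (hts : 0 < t + s) :
    0 ≤ s * u + t * v := by
  rcases le_total 0 s with hs | hs <;> rcases le_total 0 t with ht | ht
  · positivity
  · nlinarith [mul_nonneg hs hu, mul_nonneg (neg_nonneg.2 ht) hv]
  · nlinarith [mul_nonneg ht hv, mul_nonneg (neg_nonneg.2 hs) hu]
  · linarith

section

variable {E : Type*} [NormedAddCommGroup E] [InnerProductSpace ℝ E]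

theorem abs_real_inner_lt_one_of_ne {x y : E} (hx : ‖x‖ = 1) (hy : ‖y‖ = 1)
    (h : x ≠ y) (h' : x ≠ -y) : |⟪x, y⟫| < 1 := by
  have hle : |⟪x, y⟫| ≤ 1 := by simpa [hx, hy] using abs_real_inner_le_norm x y
  obtain ⟨h₁, h₂⟩ := abs_le.1 hle
  exact abs_lt.2 ⟨h₁.lt_of_ne' (mt (inner_eq_neg_one_iff_of_norm_eq_one hx hy).1 h'),
    h₂.lt_of_ne (mt (inner_eq_one_iff_of_norm_eq_one hx hy).1 h)⟩

theorem exists_eq_smul_add_smul_of_abs_inner_lt_one {a l : E} (ha : ‖a‖ = 1) (hl : ‖l‖ = 1)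
    (h : |⟪l, a⟫| < 1) :
    ∃ (e : E) (u : ℝ), 0 < u ∧ ⟪l, a⟫ ^ 2 + u ^ 2 = 1 ∧ ‖e‖ = 1 ∧ ⟪a, e⟫ = 0 ∧
      l = ⟪l, a⟫ • a + u • e := by
  set t := ⟪l, a⟫
  have hsq : ‖l - t • a‖ ^ 2 = 1 - t ^ 2 := by
    rw [norm_sub_sq_real, real_inner_smul_right, norm_smul, mul_pow, Real.norm_eq_abs, sq_abs,
      hl, ha]
    ring
  have hpos : 0 < ‖l - t • a‖ := by
    nlinarith [norm_nonneg (l - t • a), (sq_lt_one_iff_abs_lt_one t).2 h]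
  refine ⟨‖l - t • a‖⁻¹ • (l - t • a), ‖l - t • a‖, hpos, by linarith,
    norm_smul_inv_norm (norm_pos_iff.1 hpos), ?_, ?_⟩
  · rw [real_inner_smul_right, inner_sub_right, real_inner_smul_right,
      real_inner_self_eq_norm_sq, ha, real_inner_comm]
    ring
  · rw [smul_inv_smul₀ hpos.ne']
    abel

variable {a e : E}

theorem real_inner_smul_add_smul (ha : ‖a‖ = 1) (he : ‖e‖ = 1) (hae : ⟪a, e⟫ = 0)
    (p q p' q' : ℝ) : ⟪p • a + q • e, p' • a + q' • e⟫ = p * p' + q * q' := by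
  simp only [inner_add_left, inner_add_right, real_inner_smul_left, real_inner_smul_right,
    real_inner_self_eq_norm_sq, ha, he, hae, real_inner_comm a e]
  ring

theorem mul_inner_smul_add_smul_le (ha : ‖a‖ = 1) (he : ‖e‖ = 1) (hae : ⟪a, e⟫ = 0)
    {s t u v : ℝ} (hu : 0 ≤ u) (hsv : s ^ 2 + v ^ 2 = 1) (x : E) :
    v * ⟪t • a + u • e, x⟫ ≤ u * ‖x‖ + (s * u + t * v) * ⟪a, x⟫ := by
  set w := (-s) • a + v • e
  have hw : ‖w‖ = 1 := by
    refine (pow_eq_one_iff_of_nonneg (norm_nonneg w) two_ne_zero).1 ?_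
    rw [← real_inner_self_eq_norm_sq, real_inner_smul_add_smul ha he hae]
    linarith
  have hwx : ⟪w, x⟫ ≤ ‖x‖ := by simpa [hw] using real_inner_le_norm w x
  calc v * ⟪t • a + u • e, x⟫ = u * ⟪w, x⟫ + (s * u + t * v) * ⟪a, x⟫ := by
        simp only [w, inner_add_left, real_inner_smul_left]; ring
    _ ≤ u * ‖x‖ + (s * u + t * v) * ⟪a, x⟫ := by gcongr

/-- `φ_λ(y)` is the greatest element of `feasibleValues a λ ‖y‖ ⟪d, y⟫`. -/
def feasibleValues (a l : E) (ρ c : ℝ) : Set ℝ :=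
  {r | ∃ x : E, ‖x‖ ≤ ρ ∧ ⟪a, x⟫ + c ≤ 0 ∧ r = ⟪l, x⟫}

theorem mul_mem_feasibleValues (ha : ‖a‖ = 1) (he : ‖e‖ = 1) (hae : ⟪a, e⟫ = 0)
    {ρ s t u v : ℝ} (hρ : 0 ≤ ρ) (hsv : s ^ 2 + v ^ 2 = 1) :
    ρ * (u * v - s * t) ∈ feasibleValues a (t • a + u • e) ρ (ρ * s) := by
  have hnorm : ‖(-(ρ * s)) • a + (ρ * v) • e‖ ^ 2 = ρ ^ 2 := by
    rw [← real_inner_self_eq_norm_sq, real_inner_smul_add_smul ha he hae]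
    linear_combination ρ ^ 2 * hsv
  have hax : ⟪a, (-(ρ * s)) • a + (ρ * v) • e⟫ = -(ρ * s) := by
    simpa using real_inner_smul_add_smul ha he hae 1 0 (-(ρ * s)) (ρ * v)
  refine ⟨(-(ρ * s)) • a + (ρ * v) • e, ?_, by rw [hax]; linarith, ?_⟩
  · exact (pow_le_pow_iff_left₀ (norm_nonneg _) hρ two_ne_zero).1 hnorm.le
  · rw [real_inner_smul_add_smul ha he hae]; ring

theorem isGreatest_feasibleValues (ha : ‖a‖ = 1) (he : ‖e‖ = 1) (hae : ⟪a, e⟫ = 0)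
    {s t u v : ℝ} (hu : 0 ≤ u) (hv : 0 < v) (hsv : s ^ 2 + v ^ 2 = 1)
    (hsutv : 0 ≤ s * u + t * v) :
    IsGreatest (feasibleValues a (t • a + u • e) 1 s) (u * v - s * t) := by
  refine ⟨by simpa using mul_mem_feasibleValues ha he hae (t := t) (u := u) zero_le_one hsv, ?_⟩
  rintro _ ⟨x, hx, hax, rfl⟩
  have hkey := mul_inner_smul_add_smul_le ha he hae (t := t) hu hsv x
  refine le_of_mul_le_mul_left ?_ hv
  nlinarith [mul_le_mul_of_nonneg_left hx hu, mul_le_mul_of_nonneg_left hax hsutv]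

theorem div_le_neg_inner_add_of_inner_eq (ha : ‖a‖ = 1) (he : ‖e‖ = 1) (hae : ⟪a, e⟫ = 0)
    {R s t u v φ₀ : ℝ} (hu : 0 ≤ u) (hv : 0 < v) (hsv : s ^ 2 + v ^ 2 = 1) {x : E}
    (hx : ‖x‖ ≤ R) (hax : ⟪a, x⟫ = -1 - R * s) (hφ₀ : R * (u * v - s * t) ≤ φ₀) :
    (s * u + t * v) / v ≤ -⟪t • a + u • e, x⟫ + φ₀ := by
  have hkey := mul_inner_smul_add_smul_le ha he hae (t := t) hu hsv x
  rw [hax] at hkey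
  rw [div_le_iff₀ hv]
  linear_combination hkey + mul_le_mul_of_nonneg_left hx hu +
    mul_le_mul_of_nonneg_left hφ₀ hv.le - R * u * hsv

end

theorem maxnonhomob_free {n m : ℕ}
    (a lam : EuclideanSpace ℝ (Fin n)) (d : EuclideanSpace ℝ (Fin m))
    (ha : ‖a‖ = 1) (hlam : ‖lam‖ = 1)
    (hne : lam ≠ a) (hne' : lam ≠ -a) (hd : ‖d‖ < 1)
    (φ : EuclideanSpace ℝ (Fin m) → ℝ)
    (hφ : ∀ y : EuclideanSpace ℝ (Fin m),
      IsGreatest {r : ℝ | ∃ x : EuclideanSpace ℝ (Fin n),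
        ‖x‖ ≤ ‖y‖ ∧ ⟪a, x⟫ + ⟪d, y⟫ ≤ 0 ∧ r = ⟪lam, x⟫} (φ y))
    (r : EuclideanSpace ℝ (Fin m) → ℝ)
    (hr : ∀ β : EuclideanSpace ℝ (Fin m), r β =
      if ⟪lam, a⟫ + ⟪d, β⟫ ≤ 0 then 0
      else (⟪d, β⟫ + ⟪lam, a⟫ * φ β) / (φ β + ⟪d, β⟫ * ⟪lam, a⟫)) :
    ∀ (x₀ : EuclideanSpace ℝ (Fin n)) (y₀ : EuclideanSpace ℝ (Fin m)),
      y₀ ≠ 0 → ‖x₀‖ ≤ ‖y₀‖ → ⟪a, x₀⟫ + ⟪d, y₀⟫ = -1 →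
      r (‖y₀‖⁻¹ • y₀) ≤ -⟪lam, x₀⟫ + φ y₀ := by
  intro x₀ y₀ hy₀ hx₀ hsum
  change ∀ y, IsGreatest (feasibleValues a lam ‖y‖ ⟪d, y⟫) (φ y) at hφ
  rw [hr]
  split_ifs with hts
  · linarith [(hφ y₀).2 ⟨x₀, hx₀, hsum.le.trans (by norm_num), rfl⟩]
  have hβ : ‖‖y₀‖⁻¹ • y₀‖ = 1 := norm_smul_inv_norm hy₀
  have hdy : ⟪d, y₀⟫ = ‖y₀‖ * ⟪d, ‖y₀‖⁻¹ • y₀⟫ := by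
    rw [real_inner_smul_right, mul_inv_cancel_left₀ (norm_ne_zero_iff.2 hy₀)]
  generalize ‖y₀‖⁻¹ • y₀ = β at *
  set s := ⟪d, β⟫
  obtain ⟨v, hv, hsv⟩ := exists_pos_sq_add_sq_eq_one (s := s)
    (by simpa [hβ] using (abs_real_inner_le_norm d β).trans_lt (by simpa [hβ]))
  obtain ⟨e, u, hu, htu, he, hae, hlam_eq⟩ := exists_eq_smul_add_smul_of_abs_inner_lt_one ha hlam
    (abs_real_inner_lt_one_of_ne hlam ha hne hne')
  set t := ⟪lam, a⟫
  clear_value t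
  subst hlam_eq
  have hφβ : φ β = u * v - s * t := by
    refine (hβ ▸ hφ β).unique (isGreatest_feasibleValues ha he hae hu.le hv hsv ?_)
    exact mul_add_mul_nonneg_of_add_pos htu hsv hu.le hv.le (by linarith)
  have hrβ : (s + t * (u * v - s * t)) / (u * v - s * t + s * t) = (s * u + t * v) / v := by
    rw [show s + t * (u * v - s * t) = u * (s * u + t * v) by linear_combination (-s) * htu,
      sub_add_cancel, mul_div_mul_left _ _ hu.ne']
  rw [hφβ, hrβ]
  exact div_le_neg_inner_add_of_inner_eq ha he hae hu.le hv hsv hx₀ (by linarith)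
    ((hφ y₀).2 (hdy ▸ mul_mem_feasibleValues ha he hae (norm_nonneg y₀) hsv))
end
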